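/- arXiv:1007.1191 — 5 statements merged into one kernel-verified Lean document; each statement's English description precedes it below -/
import Mathlib

section
/- For every ideal I ⊆ ℝ[x₁,…,xₙ] there exists a function Ψ : ℕ → ℕ such that TH_{Ψ(k)}(I) ⊆ TH_k(√ᴿI) for all k ∈ ℕ. -/
open MvPolynomial

/-- A polynomial `h` is `k`-sos mod a set `I` of polynomials if
`h - ∑ gᵢ² ∈ I` for some polynomials `gᵢ` of degree at most `k`. -/
def IsKSos {σ : Type*} (I : Set (MvPolynomial σ ℝ)) (k : ℕ) (h : MvPolynomial σ ℝ) : Prop :=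
  ∃ (r : ℕ) (g : Fin r → MvPolynomial σ ℝ),
    (∀ i, (g i).totalDegree ≤ k) ∧ h - ∑ i, g i ^ 2 ∈ I

/-- The `k`-th theta body of `I`: the points where every linear polynomial that is
`k`-sos mod `I` is nonnegative. -/
def thetaBody {σ : Type*} (I : Set (MvPolynomial σ ℝ)) (k : ℕ) : Set (σ → ℝ) :=
  {p | ∀ l : MvPolynomial σ ℝ, l.totalDegree ≤ 1 → IsKSos I k l → 0 ≤ eval p l}

/-- The real variety of a set of polynomials. -/
def realVariety {σ : Type*} (I : Set (MvPolynomial σ ℝ)) : Set (σ → ℝ) :=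
  {x | ∀ f ∈ I, eval x f = 0}

/-- The real radical of a set of polynomials:
all `f` with `f^(2m) + ∑ gᵢ² ∈ I` for some `m` and some `gᵢ`. -/
def realRadical {σ : Type*} (I : Set (MvPolynomial σ ℝ)) : Set (MvPolynomial σ ℝ) :=
  {f | ∃ (m r : ℕ) (g : Fin r → MvPolynomial σ ℝ), f ^ (2 * m) + ∑ i, g i ^ 2 ∈ I}

/-!
A linear `l` that is `k`-sos modulo `√ᴿI` is a sum of squares of degree `≤ k` plus some
`h ∈ √ᴿI` of degree `≤ 2k + 1`. Such `h` lie in a finite-dimensional space, so they are linear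
combinations of finitely many `f ∈ √ᴿI`, and it suffices to find, for each such `f`, one degree
`N` for which `δ + c f` is `N`-sos modulo `I` for all `c` and all `δ > 0`: then `l + δ` is
`N'`-sos modulo `I` for every `δ > 0`, so `l ≥ 0` on `TH_{N'}(I)`.

If `f ^ (2m) + s ∈ I` with `s` a sum of squares, repeated completion of squares writes
`δ + c f + λ (c f) ^ E` as a sum of squares of degree `≤ E deg f / 2` for `E = 2 ^ (m + 1)` and
some `λ ≥ 0`. Modulo `I`, `(c f) ^ E = c ^ E f ^ (E - 2m) f ^ (2m)` is congruent to
`-c ^ E f ^ (E - 2m) s`, the negative of a sum of squares, and the degree bound does not depend on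
`c` or `δ`.
-/

namespace IsKSos

variable {σ : Type*} {I : Ideal (MvPolynomial σ ℝ)} {k : ℕ} {h h' : MvPolynomial σ ℝ}

lemma mono {k' : ℕ} (hk : k ≤ k') (H : IsKSos (I : Set _) k h) : IsKSos (I : Set _) k' h := by
  obtain ⟨r, g, hdeg, hmem⟩ := H
  exact ⟨r, g, fun i => (hdeg i).trans hk, hmem⟩

lemma of_sub_mem (H : IsKSos (I : Set _) k h) (hh : h' - h ∈ I) : IsKSos (I : Set _) k h' := by
  obtain ⟨r, g, hdeg, hmem⟩ := H
  refine ⟨r, g, hdeg, ?_⟩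
  simpa using I.add_mem hh hmem

lemma add (H : IsKSos (I : Set _) k h) (H' : IsKSos (I : Set _) k h') :
    IsKSos (I : Set _) k (h + h') := by
  obtain ⟨r, g, hdeg, hmem⟩ := H
  obtain ⟨r', g', hdeg', hmem'⟩ := H'
  refine ⟨r + r', Fin.append g g', Fin.addCases (by simpa using hdeg) (by simpa using hdeg'), ?_⟩
  rw [Fin.sum_univ_add]
  simp only [Fin.append_left, Fin.append_right]
  rw [SetLike.mem_coe]
  convert I.add_mem hmem hmem' using 1
  ring

lemma sq {x : MvPolynomial σ ℝ} (hx : x.totalDegree ≤ k) : IsKSos (I : Set _) k (x ^ 2) :=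
  ⟨1, ![x], fun i => by fin_cases i; exact hx, by simp⟩

lemma sum_sq {r : ℕ} {g : Fin r → MvPolynomial σ ℝ} (hg : ∀ i, (g i).totalDegree ≤ k) :
    IsKSos (I : Set _) k (∑ i, g i ^ 2) :=
  ⟨r, g, hg, by simp⟩

lemma sq_mul {j : ℕ} {x : MvPolynomial σ ℝ} (hx : x.totalDegree ≤ j) (H : IsKSos (I : Set _) k h) :
    IsKSos (I : Set _) (j + k) (x ^ 2 * h) := by
  obtain ⟨r, g, hdeg, hmem⟩ := H
  refine ⟨r, fun i => x * g i, fun i => ?_, ?_⟩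
  · exact (totalDegree_mul _ _).trans (add_le_add hx (hdeg i))
  · rw [SetLike.mem_coe]
    convert I.mul_mem_left (x ^ 2) hmem using 1
    simp only [mul_pow, ← Finset.mul_sum]
    ring

lemma C_mul {a : ℝ} (ha : 0 ≤ a) (H : IsKSos (I : Set _) k h) : IsKSos (I : Set _) k (C a * h) := by
  have hsqrt : (C (Real.sqrt a) : MvPolynomial σ ℝ) ^ 2 = C a := by
    rw [← C_pow, Real.sq_sqrt ha]
  simpa [hsqrt] using H.sq_mul (x := C (Real.sqrt a)) (j := 0) (totalDegree_C _).le

end IsKSos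

lemma totalDegree_C_mul_le {σ R : Type*} [CommSemiring R] (a : R) (p : MvPolynomial σ R) :
    (C a * p).totalDegree ≤ p.totalDegree := by
  simpa [smul_eq_C_mul] using totalDegree_smul_le a p

lemma exists_finset_subset_span_of_totalDegree_le {σ K : Type*} [Field K] [Finite σ]
    (S : Set (MvPolynomial σ K)) (d : ℕ) :
    ∃ F : Finset (MvPolynomial σ K), (F : Set _) ⊆ S ∧
      ∀ h ∈ S, h.totalDegree ≤ d → h ∈ Submodule.span K (F : Set (MvPolynomial σ K)) := by
  set H := {h ∈ S | h.totalDegree ≤ d}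
  have hfg : (Submodule.span K H).FG :=
    (Module.Finite.iff_fg.1 inferInstance).of_le
      (Submodule.span_le.2 fun h hh => (mem_restrictTotalDegree σ d h).2 hh.2)
  obtain ⟨F, hFH, hspan⟩ := (Submodule.fg_span_iff_fg_span_finset_subset H).1 hfg
  exact ⟨F, hFH.trans (Set.sep_subset _ _),
    fun h hS hd => hspan ▸ Submodule.subset_span ⟨hS, hd⟩⟩

section

variable {σ : Type*} {I : Ideal (MvPolynomial σ ℝ)} {k : ℕ}

lemma isKSos_C_add_C_mul_add_C_mul_sq {ε : ℝ} (hε : 0 < ε) (c : ℝ) {x : MvPolynomial σ ℝ}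
    (hx : x.totalDegree ≤ k) :
    IsKSos (I : Set _) k (C ε + C c * x + C (c ^ 2 / (4 * ε)) * x ^ 2) := by
  set a := Real.sqrt ε
  have ha : 0 < a := Real.sqrt_pos.2 hε
  have hεa : ε = a ^ 2 := (Real.sq_sqrt hε.le).symm
  have hdeg : (C a + C (c / (2 * a)) * x).totalDegree ≤ k :=
    (totalDegree_add _ _).trans <| max_le (by simp) ((totalDegree_C_mul_le _ _).trans hx)
  have hsq : (C a + C (c / (2 * a)) * x) ^ 2
      = C (a ^ 2) + C (2 * a * (c / (2 * a))) * x + C ((c / (2 * a)) ^ 2) * x ^ 2 := by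
    simp only [map_mul, map_pow, map_ofNat]
    ring
  convert IsKSos.sq (I := I) hdeg using 1
  rw [hsq, hεa]
  congr 4 <;> field_simp
  norm_num

-- Completing the square `ε / 2 - λ g ^ E + (λ ^ 2 / 2ε) g ^ (2E)` doubles the exponent `E`.
lemma exists_isKSos_C_add_add_C_mul_pow (g : MvPolynomial σ ℝ) (s : ℕ) {ε : ℝ} (hε : 0 < ε) :
    ∃ lam ≥ 0, IsKSos (I : Set _) (2 ^ s * g.totalDegree) (C ε + g + C lam * g ^ 2 ^ (s + 1)) := by
  induction s generalizing ε with
  | zero =>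
    refine ⟨1 / (4 * ε), by positivity, ?_⟩
    simpa using isKSos_C_add_C_mul_add_C_mul_sq (I := I) hε 1 (le_refl g.totalDegree)
  | succ s ih =>
    obtain ⟨lam, -, H⟩ := ih (half_pos hε)
    have hdeg : (g ^ 2 ^ (s + 1)).totalDegree ≤ 2 ^ (s + 1) * g.totalDegree :=
      totalDegree_pow _ _
    refine ⟨(-lam) ^ 2 / (4 * (ε / 2)), by positivity, ?_⟩
    convert (H.mono (by gcongr <;> omega)).add
      (isKSos_C_add_C_mul_add_C_mul_sq (half_pos hε) (-lam) hdeg) using 1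
    rw [map_neg, ← pow_mul, ← pow_succ]
    nth_rw 1 [← add_halves ε]
    rw [C_add]
    ring

variable (I) in
def almostSosSubmodule (N : ℕ) : Submodule ℝ (MvPolynomial σ ℝ) where
  carrier := {f | ∀ c δ : ℝ, 0 < δ → IsKSos (I : Set _) N (C δ + C c * f)}
  zero_mem' c δ hδ := by
    simpa using (IsKSos.sq (I := I) (x := 1) (k := N) (by simp)).C_mul hδ.le
  add_mem' {f g} hf hg c δ hδ := by
    convert (hf c (δ / 2) (half_pos hδ)).add (hg c (δ / 2) (half_pos hδ)) using 1
    nth_rw 1 [← add_halves δ]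
    rw [C_add]
    ring
  smul_mem' a f hf c δ hδ := by
    simpa [smul_eq_C_mul, ← mul_assoc] using hf (c * a) δ hδ

lemma almostSosSubmodule_mono {N N' : ℕ} (hN : N ≤ N') :
    almostSosSubmodule I N ≤ almostSosSubmodule I N' :=
  fun _ hf c δ hδ => (hf c δ hδ).mono hN

lemma exists_mem_almostSosSubmodule_of_mem_realRadical {f : MvPolynomial σ ℝ}
    (hf : f ∈ realRadical (I : Set _)) : ∃ N, f ∈ almostSosSubmodule I N := by
  obtain ⟨m, r, s, hmem⟩ := hf
  set B := Finset.univ.sup fun i => (s i).totalDegree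
  have hsos : IsKSos (I : Set _) B (∑ i, s i ^ 2) :=
    IsKSos.sum_sq fun i => Finset.le_sup (f := fun i => (s i).totalDegree) (Finset.mem_univ i)
  set u := 2 ^ m - m
  have hE : 2 ^ (m + 1) = 2 * u + 2 * m := by
    have := m.lt_two_pow_self
    rw [pow_succ]
    omega
  refine ⟨max (2 ^ m * f.totalDegree) (u * f.totalDegree + B), fun c δ hδ => ?_⟩
  obtain ⟨lam, hlam, H⟩ := exists_isKSos_C_add_add_C_mul_pow (I := I) (C c * f) m hδ
  have hcoeff : 0 ≤ lam * c ^ 2 ^ (m + 1) :=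
    mul_nonneg hlam ((Nat.even_pow.2 ⟨even_two, m.succ_ne_zero⟩).pow_nonneg c)
  have H' := (hsos.sq_mul (x := f ^ u) (totalDegree_pow _ _)).C_mul hcoeff
  refine ((H.mono ?_).add (H'.mono (le_max_right _ _))).of_sub_mem ?_
  · exact le_max_of_le_left (Nat.mul_le_mul_left _ (totalDegree_C_mul_le _ _))
  · have hdiff : C δ + C c * f - (C δ + C c * f + C lam * (C c * f) ^ 2 ^ (m + 1) +
          C (lam * c ^ 2 ^ (m + 1)) * ((f ^ u) ^ 2 * ∑ i, s i ^ 2))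
        = -(C (lam * c ^ 2 ^ (m + 1)) * f ^ (2 * u)) * (f ^ (2 * m) + ∑ i, s i ^ 2) := by
      rw [hE]
      simp only [map_mul, map_pow]
      ring
    rw [hdiff]
    exact I.mul_mem_left _ hmem

variable (I) in
lemma exists_forall_mem_realRadical_mem_almostSosSubmodule [Finite σ] (d : ℕ) :
    ∃ N, ∀ h ∈ realRadical (I : Set _), h.totalDegree ≤ d → h ∈ almostSosSubmodule I N := by
  obtain ⟨F, hFS, hF⟩ :=
    exists_finset_subset_span_of_totalDegree_le (realRadical (I : Set (MvPolynomial σ ℝ))) d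
  choose! N hN using fun f (hf : f ∈ F) => exists_mem_almostSosSubmodule_of_mem_realRadical (hFS hf)
  refine ⟨F.sup N, fun h hh hd => Submodule.span_le.2 (fun f hf => ?_) (hF h hh hd)⟩
  exact almostSosSubmodule_mono (Finset.le_sup hf) (hN f hf)

lemma thetaBody_subset_thetaBody_of_forall_mem_almostSosSubmodule {J : Set (MvPolynomial σ ℝ)}
    {N : ℕ} (hJ : ∀ h ∈ J, h.totalDegree ≤ 2 * k + 1 → h ∈ almostSosSubmodule I N) :
    thetaBody (I : Set _) (max k N) ⊆ thetaBody J k := by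
  rintro p hp l hl ⟨r, g, hg, hlg⟩
  have hsum : (∑ i, g i ^ 2).totalDegree ≤ 2 * k :=
    (totalDegree_finsetSum _ _).trans <| Finset.sup_le fun i _ =>
      (totalDegree_pow _ _).trans (by have := hg i; omega)
  have hmem := hJ _ hlg <| (totalDegree_sub _ _).trans <| max_le (by omega) (by omega)
  refine le_of_forall_pos_le_add fun ε hε => ?_
  have hsos : IsKSos (I : Set _) (max k N) (l + C ε) := by
    have H := ((IsKSos.sum_sq hg).mono (le_max_left k N)).add
      ((hmem 1 ε hε).mono (le_max_right k N))
    convert H using 1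
    rw [C_1]
    ring
  have hdeg : (l + C ε).totalDegree ≤ 1 :=
    (totalDegree_add _ _).trans (max_le hl (by simp))
  simpa using hp _ hdeg hsos

end

/-- For every ideal `I ⊆ ℝ[x₁,…,xₙ]` there is `Ψ : ℕ → ℕ` with
`TH_{Ψ(k)}(I) ⊆ TH_k(√ᴿI)` for all `k`. -/
theorem exists_thetaBody_subset_thetaBody_realRadical {n : ℕ}
    (I : Ideal (MvPolynomial (Fin n) ℝ)) :
    ∃ Ψ : ℕ → ℕ, ∀ k : ℕ,
      thetaBody (I : Set (MvPolynomial (Fin n) ℝ)) (Ψ k) ⊆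
        thetaBody (realRadical (I : Set (MvPolynomial (Fin n) ℝ))) k := by
  choose N hN using fun k => exists_forall_mem_realRadical_mem_almostSosSubmodule I (2 * k + 1)
  exact ⟨fun k => max k (N k),
    fun k => thetaBody_subset_thetaBody_of_forall_mem_almostSosSubmodule (hN k)⟩
end

section
/- Let G = ([n], E) be a finite simple graph and let C ⊆ [n] be the vertex set of an odd cycle in G with |C| = 2k+1. Then the odd cycle inequality Σ_{i∈C} xᵢ ≤ k is valid on TH₂(I_G); equivalently, the linear polynomial k − Σ_{i∈C} xᵢ is 2-sos mod I_G and hence nonnegative at every point of TH₂(I_G). -/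
open MvPolynomial

/-- The stable set ideal `I_G = ⟨xᵢ² - xᵢ (i ∈ [n]), xᵢxⱼ ({i,j} ∈ E)⟩` of a graph `G`. -/
noncomputable def stableIdeal {n : ℕ} (G : SimpleGraph (Fin n)) : Ideal (MvPolynomial (Fin n) ℝ) :=
  Ideal.span ((Set.range fun i : Fin n => X i ^ 2 - X i) ∪
    {p | ∃ i j : Fin n, G.Adj i j ∧ p = X i * X j})

/-! Work in `ℝ[x] ⧸ I_G`, where every `xᵢ` is idempotent and `xᵢ xⱼ = 0` along edges; then
`b (1 - p - q)` is idempotent, hence its own square, whenever `b` is idempotent and `p`, `q` are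
the classes of the two ends of an edge. Label the odd cycle `v₀, v₁, …, v₂ₖ` and split by `x₀`:
the edges `v₁v₂, v₃v₄, …, v₂ₖ₋₁v₂ₖ` cover `C ∖ {v₀}` and the edges `v₂v₃, …, v₂ₖ₋₂v₂ₖ₋₁` cover
`C ∖ {v₀, v₁, v₂ₖ}`, so
`∑ⱼ ((1 - x₀)(1 - x₂ⱼ₋₁ - x₂ⱼ))² + ∑ⱼ (x₀ (1 - x₂ⱼ - x₂ⱼ₊₁))² = k - ∑ᵢ xᵢ + x₀x₁ + x₀x₂ₖ`,
and the last two terms vanish because `v₀v₁` and `v₂ₖv₀` are edges. The squared polynomials have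
degree `2`. -/

open Finset

section IdempotentIdentity

variable {R : Type*} [CommRing R]

lemma IsIdempotentElem.mul_one_sub_sub {b p q : R} (hb : IsIdempotentElem b)
    (hp : IsIdempotentElem p) (hq : IsIdempotentElem q) (hpq : p * q = 0) :
    IsIdempotentElem (b * (1 - p - q)) := by
  rw [sub_sub]
  exact hb.mul ((hp.add hq (by rw [mul_comm q, hpq, add_zero])).one_sub)

-- Keeping the chord term `y 0 * y (2m+2)` makes the identity hold along any path, so that it
-- goes through by induction on `m`.
theorem sum_sq_eq_sub_sum_add_of_path (y : ℕ → R) (hy : ∀ i, IsIdempotentElem (y i)) (m : ℕ)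
    (hpath : ∀ i < 2 * m + 2, y i * y (i + 1) = 0) :
    ∑ j ∈ range (m + 1), ((1 - y 0) * (1 - y (2 * j + 1) - y (2 * j + 2))) ^ 2
        + ∑ j ∈ range m, (y 0 * (1 - y (2 * j + 2) - y (2 * j + 3))) ^ 2
      = (m + 1 : R) - ∑ i ∈ range (2 * m + 3), y i + y 0 * y (2 * m + 2) := by
  have hsq {x : R} (hx : IsIdempotentElem x) : x ^ 2 = x := hx.pow_succ_eq 1
  induction m with
  | zero =>
    rw [sum_range_one, range_zero, sum_empty, add_zero,
      hsq ((hy 0).one_sub.mul_one_sub_sub (hy 1) (hy 2) (hpath 1 (by omega)))]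
    simp only [sum_range_succ, range_zero, sum_empty]
    linear_combination hpath 0 (by omega)
  | succ m ih =>
    have hA := hsq ((hy 0).one_sub.mul_one_sub_sub (hy (2 * m + 3)) (hy (2 * m + 4))
      (hpath (2 * m + 3) (by omega)))
    have hB := hsq ((hy 0).mul_one_sub_sub (hy (2 * m + 2)) (hy (2 * m + 3))
      (hpath (2 * m + 2) (by omega)))
    have hS : ∑ i ∈ range (2 * m + 5), y i = ∑ i ∈ range (2 * m + 3), y i + y (2 * m + 3)
        + y (2 * m + 4) := by
      rw [sum_range_succ, sum_range_succ]
    rw [sum_range_succ _ (m + 1), sum_range_succ (fun j ↦ (y 0 * _) ^ 2) m,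
      show 2 * (m + 1) + 1 = 2 * m + 3 by ring, show 2 * (m + 1) + 2 = 2 * m + 4 by ring,
      show 2 * (m + 1) + 3 = 2 * m + 5 by ring]
    push_cast
    linear_combination ih (fun i hi ↦ hpath i (by omega)) + hA + hB + hS

end IdempotentIdentity

lemma isKSos_of_mk_eq_sum_sq {σ ι : Type*} {I : Ideal (MvPolynomial σ ℝ)} {k : ℕ}
    {h : MvPolynomial σ ℝ} (t : Finset ι) (g : ι → MvPolynomial σ ℝ)
    (hdeg : ∀ i ∈ t, (g i).totalDegree ≤ k)
    (heq : Ideal.Quotient.mk I h = ∑ i ∈ t, Ideal.Quotient.mk I (g i) ^ 2) :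
    IsKSos (I : Set (MvPolynomial σ ℝ)) k h := by
  refine ⟨t.card, fun j ↦ g (t.equivFin.symm j), fun j ↦ hdeg _ (t.equivFin.symm j).2, ?_⟩
  rw [SetLike.mem_coe, ← Ideal.Quotient.eq_zero_iff_mem, map_sub, map_sum, sub_eq_zero, heq]
  simp only [map_pow]
  rw [Equiv.sum_comp t.equivFin.symm (fun i ↦ Ideal.Quotient.mk I (g i) ^ 2)]
  exact (sum_coe_sort t _).symm

section TotalDegree

variable {σ R : Type*} [CommRing R] [Nontrivial R]

lemma totalDegree_one_sub_X_le (a : σ) :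
    (1 - X a : MvPolynomial σ R).totalDegree ≤ 1 :=
  (totalDegree_sub _ _).trans (max_le (by simp only [totalDegree_one, zero_le])
    (totalDegree_X a).le)

lemma totalDegree_one_sub_X_sub_X_le (a b : σ) :
    (1 - X a - X b : MvPolynomial σ R).totalDegree ≤ 1 :=
  (totalDegree_sub _ _).trans (max_le (totalDegree_one_sub_X_le a) (totalDegree_X b).le)

lemma totalDegree_C_sub_sum_X_le (c : R) (s : Finset σ) :
    (C c - ∑ i ∈ s, X i : MvPolynomial σ R).totalDegree ≤ 1 :=
  (totalDegree_sub _ _).trans (max_le (by simp only [totalDegree_C, zero_le])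
    ((totalDegree_finsetSum _ _).trans (Finset.sup_le fun i _ ↦ (totalDegree_X i).le)))

end TotalDegree

section StableIdeal

variable {n : ℕ} (G : SimpleGraph (Fin n))

lemma isIdempotentElem_mk_X_stableIdeal (i : Fin n) :
    IsIdempotentElem (Ideal.Quotient.mk (stableIdeal G) (X i)) := by
  rw [IsIdempotentElem, ← map_mul, Ideal.Quotient.eq]
  exact Ideal.subset_span (Set.mem_union_left _ ⟨i, by ring⟩)

variable {G} in
lemma mk_X_mul_X_stableIdeal_of_adj {i j : Fin n} (hij : G.Adj i j) :
    Ideal.Quotient.mk (stableIdeal G) (X i) * Ideal.Quotient.mk (stableIdeal G) (X j) = 0 := by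
  rw [← map_mul, Ideal.Quotient.eq_zero_iff_mem]
  exact Ideal.subset_span (Set.mem_union_right _ ⟨i, j, hij, rfl⟩)

end StableIdeal

namespace SimpleGraph.Walk

variable {V : Type*} {G : SimpleGraph V} {u v : V}

lemma mem_support_iff_exists_getVert_lt {w : G.Walk u u} (hw : 0 < w.length) :
    v ∈ w.support ↔ ∃ i < w.length, w.getVert i = v := by
  rw [mem_support_iff_exists_getVert]
  constructor
  · rintro ⟨i, rfl, hi⟩
    rcases hi.lt_or_eq with hi | rfl
    · exact ⟨i, hi, rfl⟩
    · exact ⟨0, hw, by rw [getVert_zero, getVert_length]⟩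
  · rintro ⟨i, hi, rfl⟩
    exact ⟨i, rfl, hi.le⟩

theorem isKSos_stableIdeal_of_length_eq_odd {n k : ℕ} {G : SimpleGraph (Fin n)} {u : Fin n}
    (w : G.Walk u u) (hlen : w.length = 2 * k + 1) :
    IsKSos (stableIdeal G : Set (MvPolynomial (Fin n) ℝ)) 2
      (C (k : ℝ) - ∑ i ∈ range w.length, X (w.getVert i)) := by
  obtain ⟨m, rfl⟩ : ∃ m, k = m + 1 := by
    rcases k with _ | m
    · have h := w.adj_getVert_succ (i := 0) (by omega)
      rw [show 0 + 1 = w.length by omega, getVert_zero, getVert_length] at h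
      exact (G.irrefl h).elim
    · exact ⟨m, rfl⟩
  set y : ℕ → MvPolynomial (Fin n) ℝ ⧸ stableIdeal G :=
    fun i ↦ Ideal.Quotient.mk _ (X (w.getVert i))
  have hy (i : ℕ) : IsIdempotentElem (y i) := isIdempotentElem_mk_X_stableIdeal G _
  have hpath : ∀ i < 2 * m + 2, y i * y (i + 1) = 0 := fun i hi ↦
    mk_X_mul_X_stableIdeal_of_adj (w.adj_getVert_succ (by omega))
  have hchord : y 0 * y (2 * m + 2) = 0 := by
    have h := w.adj_getVert_succ (i := 2 * m + 2) (by omega)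
    rw [show 2 * m + 2 + 1 = w.length by omega, getVert_length] at h
    exact mk_X_mul_X_stableIdeal_of_adj (by rw [getVert_zero]; exact h.symm)
  refine isKSos_of_mk_eq_sum_sq ((range (m + 1)).disjSum (range m))
    (Sum.elim
      (fun j ↦
        (1 - X (w.getVert 0)) * (1 - X (w.getVert (2 * j + 1)) - X (w.getVert (2 * j + 2))))
      (fun j ↦ X (w.getVert 0) * (1 - X (w.getVert (2 * j + 2)) - X (w.getVert (2 * j + 3)))))
    ?_ ?_
  · rintro (j | j) -
    · exact (totalDegree_mul _ _).trans
        (add_le_add (totalDegree_one_sub_X_le _) (totalDegree_one_sub_X_sub_X_le _ _))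
    · exact (totalDegree_mul _ _).trans
        (add_le_add (totalDegree_X _).le (totalDegree_one_sub_X_sub_X_le _ _))
  · rw [sum_disjSum]
    simp only [Sum.elim_inl, Sum.elim_inr, map_mul, map_sub, map_one, map_sum]
    rw [sum_sq_eq_sub_sum_add_of_path y hy m hpath, hchord, add_zero, hlen,
      map_natCast C, map_natCast, show 2 * (m + 1) + 1 = 2 * m + 3 by ring]
    push_cast
    rfl

end SimpleGraph.Walk

/-- If `s` is the vertex set of an odd cycle in `G` with `|s| = 2k+1`, then
`k - ∑_{i ∈ s} xᵢ` is `2`-sos mod `I_G`, and hence the odd cycle inequality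
`∑_{i ∈ s} xᵢ ≤ k` is valid on `TH₂(I_G)`. -/
theorem odd_cycle_inequality_valid {n k : ℕ} (G : SimpleGraph (Fin n)) (s : Finset (Fin n))
    (hcard : s.card = 2 * k + 1)
    (hcyc : ∃ (u : Fin n) (w : G.Walk u u), w.IsCycle ∧ ∀ v : Fin n, v ∈ w.support ↔ v ∈ s) :
    IsKSos ((stableIdeal G : Ideal (MvPolynomial (Fin n) ℝ)) : Set (MvPolynomial (Fin n) ℝ)) 2
        (C (k : ℝ) - ∑ i ∈ s, X i) ∧
      ∀ p ∈ thetaBody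
          ((stableIdeal G : Ideal (MvPolynomial (Fin n) ℝ)) : Set (MvPolynomial (Fin n) ℝ)) 2,
        ∑ i ∈ s, p i ≤ (k : ℝ) := by
  obtain ⟨u, w, hw, hsupp⟩ := hcyc
  have hpos : 0 < w.length := by have := hw.three_le_length; omega
  have hs : s = (range w.length).image w.getVert := by
    ext v
    simp only [← hsupp, w.mem_support_iff_exists_getVert_lt hpos, mem_image, mem_range]
  have hinj : Set.InjOn w.getVert (range w.length) :=
    hw.getVert_injOn'.mono fun i hi ↦ by
      simp only [coe_range, Set.mem_Iio] at hi
      simp only [Set.mem_ofPred_eq]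
      omega
  have hlen : w.length = 2 * k + 1 := by rw [← hcard, hs, card_image_of_injOn hinj, card_range]
  have hsos : IsKSos (stableIdeal G : Set (MvPolynomial (Fin n) ℝ)) 2
      (C (k : ℝ) - ∑ i ∈ s, X i) := by
    rw [hs, sum_image hinj]
    exact w.isKSos_stableIdeal_of_length_eq_odd hlen
  refine ⟨hsos, fun p hp ↦ ?_⟩
  have h := hp _ (totalDegree_C_sub_sum_X_le _ _) hsos
  simpa only [map_sub, eval_C, map_sum, eval_X, sub_nonneg] using h
end

section
/- Let G be an odd cycle of length at least five, i.e., G = ([n], E) with n = 2k+1 ≥ 5 and E = {{i, i+1} : i ∈ [n]} (indices mod n). Then STAB(G) = TH₂(I_G). -/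
open MvPolynomial

/-- `S_G`: the set of characteristic vectors of stable sets of `G`. -/
def stableSetVectors {n : ℕ} (G : SimpleGraph (Fin n)) : Set (Fin n → ℝ) :=
  {x | ∃ U : Finset (Fin n), (∀ i ∈ U, ∀ j ∈ U, ¬G.Adj i j) ∧
    x = fun i => if i ∈ U then (1 : ℝ) else 0}

/-- The stable set polytope `STAB(G) = conv(S_G)`. -/
def stabPolytope {n : ℕ} (G : SimpleGraph (Fin n)) : Set (Fin n → ℝ) :=
  convexHull ℝ (stableSetVectors G)

/-!
Every graph satisfies `STAB(G) ⊆ TH_k(I_G)`: the points of `S_G` lie on the real variety of `I_G`,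
where a polynomial that is a sum of squares modulo `I_G` is nonnegative, and theta bodies are convex
because linear polynomials evaluate affinely.

Conversely, on the cycle `C_n` with `n = 2k+1` the linear polynomials `xᵢ`, `1 - xᵢ - xᵢ₊₁` and
`k - ∑ xᵢ` are 2-sos modulo `I_G`. The first two are idempotent modulo `I_G`, and `n (k - ∑ xᵢ)` is
congruent to a sum of products `u (1 - xⱼ - xⱼ₊₁)` with `u ∈ {xᵢ, 1 - xᵢ}`, which are idempotents of
degree two. Hence a point of `TH₂` satisfies the nonnegativity, edge and odd cycle inequalities, and
such a point lies in `STAB(C_n)` by circular rounding: lay arcs of lengths `xᵢ`, separated by gaps,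
around a circle of circumference `k`, and select the vertices whose arc contains a point of `θ + ℤ`.
Consecutive arcs fit in a window of length one, so the selection is stable, and averaging over
`θ ∈ (0, 1]` returns the point.
-/

lemma Finsupp.eq_zero_or_eq_single_of_degree_le_one {σ : Type*} {d : σ →₀ ℕ}
    (hd : d.degree ≤ 1) : d = 0 ∨ ∃ j, d = Finsupp.single j 1 := by
  rcases Nat.le_one_iff_eq_zero_or_eq_one.mp hd with h | h
  · exact .inl ((Finsupp.degree_eq_zero_iff d).mp h)
  · exact .inr ((Finsupp.sum_eq_one_iff d).mp h)

lemma MvPolynomial.eval_add_smul_of_totalDegree_le_one {σ : Type*} {l : MvPolynomial σ ℝ}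
    (hl : l.totalDegree ≤ 1) (p q : σ → ℝ) {a b : ℝ} (hab : a + b = 1) :
    eval (a • p + b • q) l = a * eval p l + b * eval q l := by
  simp only [eval_eq, Finset.mul_sum, ← Finset.sum_add_distrib]
  refine Finset.sum_congr rfl fun d hd => ?_
  rcases Finsupp.eq_zero_or_eq_single_of_degree_le_one ((le_totalDegree hd).trans hl) with
    rfl | ⟨j, rfl⟩
  · simp only [Finsupp.support_zero, Finset.prod_empty]
    linear_combination coeff 0 l * hab.symm
  · simp only [ne_eq, one_ne_zero, not_false_eq_true, Finsupp.support_single,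
      Finset.prod_singleton, Finsupp.single_eq_same, pow_one, Pi.add_apply, Pi.smul_apply,
      smul_eq_mul]
    ring

lemma convex_thetaBody {σ : Type*} (I : Set (MvPolynomial σ ℝ)) (k : ℕ) :
    Convex ℝ (thetaBody I k) := by
  intro p hp q hq a b ha hb hab l hl hsos
  rw [eval_add_smul_of_totalDegree_le_one hl p q hab]
  have := hp l hl hsos
  have := hq l hl hsos
  positivity

lemma realVariety_subset_thetaBody {σ : Type*} (I : Set (MvPolynomial σ ℝ)) (k : ℕ) :
    realVariety I ⊆ thetaBody I k := by
  rintro x hx l - ⟨r, g, -, hmem⟩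
  have : eval x l = eval x (l - ∑ i, g i ^ 2) + ∑ i, eval x (g i) ^ 2 := by simp
  rw [this, hx _ hmem, zero_add]
  positivity

lemma stableSetVectors_subset_realVariety {n : ℕ} (G : SimpleGraph (Fin n)) :
    stableSetVectors G ⊆ realVariety (stableIdeal G : Set (MvPolynomial (Fin n) ℝ)) := by
  rintro _ ⟨U, hU, rfl⟩ f hf
  induction hf using Submodule.span_induction with
  | mem f hf =>
    rcases hf with ⟨i, rfl⟩ | ⟨i, j, hij, rfl⟩
    · simp
    · by_cases hi : i ∈ U
      · simp [hi, show j ∉ U from fun hj => hU i hi j hj hij]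
      · simp [hi]
  | zero => simp
  | add f g _ _ hf hg => simp [hf, hg]
  | smul a f _ hf => simp [hf]

lemma stabPolytope_subset_thetaBody {n : ℕ} (G : SimpleGraph (Fin n)) (k : ℕ) :
    stabPolytope G ⊆ thetaBody (stableIdeal G : Set (MvPolynomial (Fin n) ℝ)) k :=
  convexHull_min (s := stableSetVectors G)
    ((stableSetVectors_subset_realVariety G).trans (realVariety_subset_thetaBody _ k))
    (convex_thetaBody _ k)

section IsKSos

variable {σ : Type*} {I : Ideal (MvPolynomial σ ℝ)} {d : ℕ}

lemma isKSos_of_sub_sum_sq_mem {ι : Type*} [Fintype ι] {h : MvPolynomial σ ℝ}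
    (g : ι → MvPolynomial σ ℝ) (hg : ∀ i, (g i).totalDegree ≤ d) (hh : h - ∑ i, g i ^ 2 ∈ I) :
    IsKSos I d h := by
  let e := Fintype.equivFin ι
  refine ⟨Fintype.card ι, g ∘ e.symm, fun i => hg _, ?_⟩
  simpa only [Function.comp_apply, Equiv.sum_comp e.symm (fun i => g i ^ 2), SetLike.mem_coe]
    using hh

lemma isKSos_zero : IsKSos (I : Set (MvPolynomial σ ℝ)) d 0 :=
  isKSos_of_sub_sum_sq_mem (Fin.elim0 : Fin 0 → MvPolynomial σ ℝ) (fun i => i.elim0) (by simp)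

lemma IsKSos.add_s7 {p q : MvPolynomial σ ℝ} (hp : IsKSos I d p) (hq : IsKSos I d q) :
    IsKSos I d (p + q) := by
  obtain ⟨r, g, hg, hpg⟩ := hp
  obtain ⟨s, g', hg', hqg⟩ := hq
  refine isKSos_of_sub_sum_sq_mem (Sum.elim g g') (Sum.forall.mpr ⟨hg, hg'⟩) ?_
  rw [Fintype.sum_sum_type]
  convert I.add_mem hpg hqg using 1
  simp only [Sum.elim_inl, Sum.elim_inr]
  ring

lemma IsKSos.sum {ι : Type*} (s : Finset ι) {f : ι → MvPolynomial σ ℝ}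
    (hf : ∀ i ∈ s, IsKSos I d (f i)) : IsKSos I d (∑ i ∈ s, f i) :=
  Finset.sum_induction f _ (fun _ _ => IsKSos.add_s7) isKSos_zero hf

lemma IsKSos.C_mul_s7 {p : MvPolynomial σ ℝ} (hp : IsKSos I d p) {c : ℝ} (hc : 0 ≤ c) :
    IsKSos I d (C c * p) := by
  obtain ⟨r, g, hg, hpg⟩ := hp
  refine isKSos_of_sub_sum_sq_mem (fun i => C √c * g i)
    (fun i => (totalDegree_mul _ _).trans (by simpa using hg i)) ?_
  convert I.mul_mem_left (C c) hpg using 1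
  simp only [mul_pow, ← map_pow, Real.sq_sqrt hc, mul_sub, Finset.mul_sum]

lemma IsKSos.of_mk_eq {p q : MvPolynomial σ ℝ} (hp : IsKSos I d p)
    (hpq : Ideal.Quotient.mk I q = Ideal.Quotient.mk I p) : IsKSos I d q := by
  obtain ⟨r, g, hg, hpg⟩ := hp
  exact ⟨r, g, hg, by simpa using I.add_mem (Ideal.Quotient.eq.mp hpq) hpg⟩

lemma isKSos_of_isIdempotentElem {e : MvPolynomial σ ℝ} (he : e.totalDegree ≤ d)
    (he' : IsIdempotentElem (Ideal.Quotient.mk I e)) : IsKSos I d e := by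
  refine isKSos_of_sub_sum_sq_mem (fun _ : Unit => e) (fun _ => he) ?_
  rw [Fintype.sum_unique, ← Ideal.Quotient.eq, map_pow, sq, he'.eq]

end IsKSos

lemma Fintype.sum_comp_add_right {G M : Type*} [AddGroup G] [Fintype G] [AddCommMonoid M]
    (f : G → M) (c : G) : ∑ i, f (i + c) = ∑ i, f i :=
  Fintype.sum_equiv (Equiv.addRight c) _ _ fun _ => rfl

open Fin.NatCast

section OddCycleIdentity

open Finset

variable {A : Type*} [CommRing A] {n : ℕ} [NeZero n] (x : Fin n → A)

def edgeSlack (i : Fin n) : A := 1 - x i - x (i + 1)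

def oddCycleTerm (d : ℕ) (i : Fin n) : A :=
  (if Even d then x i else 1 - x i) * edgeSlack x (i + d)

def cycleCorrelation (d : ℕ) : A := ∑ i, x i * x (i + d)

lemma sum_edgeSlack_add (c : Fin n) : ∑ i, edgeSlack x (i + c) = n - 2 * ∑ i, x i := by
  rw [Fintype.sum_comp_add_right (edgeSlack x)]
  simp only [edgeSlack, sum_sub_distrib, sum_const, card_univ, Fintype.card_fin, nsmul_eq_mul,
    mul_one, Fintype.sum_comp_add_right x]
  ring

lemma sum_mul_edgeSlack (d : ℕ) :
    ∑ i, x i * edgeSlack x (i + d) =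
      ∑ i, x i - cycleCorrelation x d - cycleCorrelation x (d + 1) := by
  simp only [edgeSlack, cycleCorrelation, Nat.cast_succ, ← add_assoc, mul_sub, mul_one,
    sum_sub_distrib]

lemma sum_oddCycleTerm_of_even {d : ℕ} (hd : Even d) :
    ∑ i, oddCycleTerm x d i = ∑ i, x i - cycleCorrelation x d - cycleCorrelation x (d + 1) := by
  simp only [oddCycleTerm, if_pos hd, sum_mul_edgeSlack]

lemma sum_oddCycleTerm_of_odd {d : ℕ} (hd : ¬Even d) :
    ∑ i, oddCycleTerm x d i =
      n - 3 * ∑ i, x i + cycleCorrelation x d + cycleCorrelation x (d + 1) := by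
  simp only [oddCycleTerm, if_neg hd, sub_mul, one_mul, sum_sub_distrib, sum_edgeSlack_add,
    sum_mul_edgeSlack]
  ring

lemma sum_oddCycleTerm_add_sum_oddCycleTerm (m : ℕ) :
    ∑ i, oddCycleTerm x (m + 1) i + ∑ i, oddCycleTerm x (m + 2) i =
      n - 2 * ∑ i, x i + (-1) ^ m * (cycleCorrelation x (m + 1) - cycleCorrelation x (m + 3)) := by
  rcases Nat.even_or_odd m with hm | hm
  · rw [sum_oddCycleTerm_of_odd x (by simp [Nat.even_add_one, hm]),
      sum_oddCycleTerm_of_even x (by simp [Nat.even_add, hm]), hm.neg_one_pow]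
    ring
  · rw [sum_oddCycleTerm_of_even x (by simp [hm]),
      sum_oddCycleTerm_of_odd x (by simp [Nat.even_add, Nat.not_even_iff_odd, hm]),
      hm.neg_one_pow]
    ring

lemma cycleCorrelation_eq_of_add_eq {d e : ℕ} (h : d + e = n) :
    cycleCorrelation x d = cycleCorrelation x e := by
  have hde : (e : Fin n) + d = 0 := by rw [← Nat.cast_add, add_comm, h, Fin.natCast_self]
  rw [cycleCorrelation, ← Fintype.sum_comp_add_right _ (e : Fin n)]
  simp only [add_assoc, hde, add_zero, cycleCorrelation, mul_comm]

lemma map_edgeSlack {B : Type*} [CommRing B] (f : A →+* B) (i : Fin n) :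
    f (edgeSlack x i) = edgeSlack (f ∘ x) i := by
  simp [edgeSlack]

lemma map_oddCycleTerm {B : Type*} [CommRing B] (f : A →+* B) (d : ℕ) (i : Fin n) :
    f (oddCycleTerm x d i) = oddCycleTerm (f ∘ x) d i := by
  simp [oddCycleTerm, map_edgeSlack, apply_ite f]

variable {x} (hx : ∀ i, x i * x (i + 1) = 0)
include hx

lemma cycleCorrelation_one : cycleCorrelation x 1 = 0 := by
  simp [cycleCorrelation, hx]

lemma sum_range_succ_add_sum_range_oddCycleTerm (m : ℕ) :
    ∑ d ∈ range (m + 1), ∑ i, oddCycleTerm x (d + 1) i +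
        ∑ d ∈ range m, ∑ i, oddCycleTerm x (d + 1) i =
      (m + 1) * (n - 2 * ∑ i, x i) - ∑ i, x i +
        (-1) ^ m * (cycleCorrelation x (m + 2) - cycleCorrelation x (m + 1)) := by
  induction m with
  | zero =>
    simp only [zero_add, range_one, sum_singleton, range_zero, sum_empty, add_zero,
      sum_oddCycleTerm_of_odd x Nat.not_even_one, cycleCorrelation_one hx, pow_zero]
    push_cast
    ring
  | succ m ih =>
    have hW := fun m => sum_range_succ (fun d => ∑ i, oddCycleTerm x (d + 1) i) m
    push_cast
    linear_combination ih + sum_oddCycleTerm_add_sum_oddCycleTerm x m + hW (m + 1) + hW m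

lemma isIdempotentElem_edgeSlack (hx' : ∀ i, IsIdempotentElem (x i)) (i : Fin n) :
    IsIdempotentElem (edgeSlack x i) := by
  unfold IsIdempotentElem edgeSlack
  linear_combination (hx' i).eq + (hx' (i + 1)).eq + 2 * hx i

lemma isIdempotentElem_oddCycleTerm (hx' : ∀ i, IsIdempotentElem (x i)) (d : ℕ) (i : Fin n) :
    IsIdempotentElem (oddCycleTerm x d i) := by
  refine IsIdempotentElem.mul ?_ (isIdempotentElem_edgeSlack hx hx' _)
  split_ifs
  exacts [hx' i, (hx' i).one_sub]

end OddCycleIdentity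

lemma mul_sub_sum_eq_sum_oddCycleTerm {A : Type*} [CommRing A] {k : ℕ} (hk : 1 ≤ k)
    {x : Fin (2 * k + 1) → A} (hx : ∀ i, x i * x (i + 1) = 0) :
    (2 * k + 1 : A) * (k - ∑ i, x i) =
      ∑ d ∈ Finset.range k, ∑ i, oddCycleTerm x (d + 1) i +
        ∑ d ∈ Finset.range (k - 1), ∑ i, oddCycleTerm x (d + 1) i := by
  -- the correlation terms cancel since `k + 1` and `k` are opposite shifts on the cycle
  obtain ⟨m, rfl⟩ : ∃ m, k = m + 1 := ⟨k - 1, by omega⟩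
  rw [Nat.add_sub_cancel, sum_range_succ_add_sum_range_oddCycleTerm hx m,
    cycleCorrelation_eq_of_add_eq x (show m + 2 + (m + 1) = 2 * (m + 1) + 1 by ring)]
  push_cast
  ring

section CycleGraph

variable {n : ℕ} [NeZero n]

lemma SimpleGraph.cycleGraph_adj_add_one (hn : 1 < n) (i : Fin n) :
    (SimpleGraph.cycleGraph n).Adj i (i + 1) := by
  simp [SimpleGraph.cycleGraph_adj', Nat.mod_eq_of_lt hn]

lemma SimpleGraph.eq_add_one_or_eq_add_one_of_cycleGraph_adj {i j : Fin n}
    (h : (SimpleGraph.cycleGraph n).Adj i j) : i = j + 1 ∨ j = i + 1 := by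
  have hn : 1 < n := by
    by_contra! hn
    have : Subsingleton (Fin n) := Fin.subsingleton_iff_le_one.mpr hn
    exact h.ne (Subsingleton.elim i j)
  rw [SimpleGraph.cycleGraph_adj'] at h
  have h1 : ((1 : Fin n) : ℕ) = 1 := by simp [Nat.mod_eq_of_lt hn]
  rcases h with h | h
  · exact .inl (eq_add_of_sub_eq' (Fin.ext (h.trans h1.symm)))
  · exact .inr (eq_add_of_sub_eq' (Fin.ext (h.trans h1.symm)))

end CycleGraph

section StableIdeal

variable {n : ℕ} (G : SimpleGraph (Fin n))

local notation "π" => Ideal.Quotient.mk (stableIdeal G)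

lemma isIdempotentElem_mk_X (i : Fin n) : IsIdempotentElem (π (X i)) := by
  rw [IsIdempotentElem, ← map_mul, Ideal.Quotient.eq, ← sq]
  exact Ideal.subset_span (.inl ⟨i, rfl⟩)

lemma mk_X_mul_mk_X_of_adj {i j : Fin n} (h : G.Adj i j) : π (X i) * π (X j) = 0 := by
  rw [← map_mul, Ideal.Quotient.eq_zero_iff_mem]
  exact Ideal.subset_span (.inr ⟨i, j, h, rfl⟩)

lemma isKSos_X {d : ℕ} (hd : 1 ≤ d) (i : Fin n) :
    IsKSos (stableIdeal G : Set (MvPolynomial (Fin n) ℝ)) d (X i) :=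
  isKSos_of_isIdempotentElem ((totalDegree_X i).trans_le hd) (isIdempotentElem_mk_X G i)

end StableIdeal

lemma totalDegree_natCast_sub_sum_X_le {σ : Type*} [Fintype σ] (k : ℕ) :
    ((k : MvPolynomial σ ℝ) - ∑ i, X i).totalDegree ≤ 1 := by
  refine (totalDegree_sub _ _).trans (max_le ?_ (totalDegree_finsetSum_le fun i _ => by simp))
  rw [← map_natCast C, totalDegree_C]
  exact zero_le_one

section OddCycleCertificate

variable {n : ℕ} [NeZero n]

lemma totalDegree_edgeSlack_X_le (i : Fin n) :
    (edgeSlack (X : Fin n → MvPolynomial (Fin n) ℝ) i).totalDegree ≤ 1 := by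
  refine (totalDegree_sub _ _).trans (max_le ((totalDegree_sub _ _).trans (max_le ?_ ?_)) ?_) <;>
    simp

lemma totalDegree_oddCycleTerm_X_le (d : ℕ) (i : Fin n) :
    (oddCycleTerm (X : Fin n → MvPolynomial (Fin n) ℝ) d i).totalDegree ≤ 2 := by
  refine (totalDegree_mul _ _).trans (add_le_add ?_ (totalDegree_edgeSlack_X_le _))
  split_ifs
  · simp
  · exact (totalDegree_sub _ _).trans (by simp)

lemma isKSos_edgeSlack_X (hn : 1 < n) {d : ℕ} (hd : 1 ≤ d) (i : Fin n) :
    IsKSos (stableIdeal (SimpleGraph.cycleGraph n) : Set (MvPolynomial (Fin n) ℝ)) d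
      (edgeSlack X i) := by
  refine isKSos_of_isIdempotentElem ((totalDegree_edgeSlack_X_le i).trans hd) ?_
  rw [map_edgeSlack]
  exact isIdempotentElem_edgeSlack
    (fun j => mk_X_mul_mk_X_of_adj _ (SimpleGraph.cycleGraph_adj_add_one hn j))
    (isIdempotentElem_mk_X _) i

end OddCycleCertificate

lemma isKSos_natCast_sub_sum_X {k : ℕ} (hk : 1 ≤ k) :
    IsKSos (stableIdeal (SimpleGraph.cycleGraph (2 * k + 1)) :
      Set (MvPolynomial (Fin (2 * k + 1)) ℝ)) 2 ((k : MvPolynomial _ ℝ) - ∑ i, X i) := by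
  set I := stableIdeal (SimpleGraph.cycleGraph (2 * k + 1))
  have hxx (i : Fin (2 * k + 1)) :
      Ideal.Quotient.mk I (X i) * Ideal.Quotient.mk I (X (i + 1)) = 0 :=
    mk_X_mul_mk_X_of_adj _ (SimpleGraph.cycleGraph_adj_add_one (by omega) i)
  have hterms (m : ℕ) : IsKSos (I : Set (MvPolynomial (Fin (2 * k + 1)) ℝ)) 2
      (∑ d ∈ Finset.range m, ∑ i, oddCycleTerm X (d + 1) i) :=
    IsKSos.sum _ fun d _ => IsKSos.sum _ fun i _ =>
      isKSos_of_isIdempotentElem (totalDegree_oddCycleTerm_X_le _ i) (by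
        rw [map_oddCycleTerm]
        exact isIdempotentElem_oddCycleTerm hxx (isIdempotentElem_mk_X _) _ i)
  have hcert := ((hterms k).add_s7 (hterms (k - 1))).of_mk_eq
    (q := C (2 * k + 1 : ℝ) * ((k : MvPolynomial _ ℝ) - ∑ i, X i)) (by
      simp only [map_add, map_mul, map_sub, map_sum, map_ofNat, map_natCast, map_one,
        map_oddCycleTerm]
      exact mul_sub_sum_eq_sum_oddCycleTerm hk hxx)
  have := hcert.C_mul_s7 (c := (2 * k + 1 : ℝ)⁻¹) (by positivity)
  rwa [← mul_assoc, ← map_mul, inv_mul_cancel₀ (by positivity), map_one, one_mul] at this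

section Rounding

open MeasureTheory Set

lemma Int.floor_le_floor_of_floor_lt_floor {a b c d : ℝ} (hbc : b ≤ c) (hda : d ≤ a + 1)
    (hab : ⌊a⌋ < ⌊b⌋) : ⌊d⌋ ≤ ⌊c⌋ := by
  have h1 := Int.floor_le_floor hbc
  have h2 := Int.floor_le_floor hda
  rw [Int.floor_add_one] at h2
  omega

lemma Int.cast_floor_add_sub_floor {a ℓ : ℝ} (h0 : 0 ≤ ℓ) (h1 : ℓ ≤ 1) :
    ((⌊a + ℓ⌋ - ⌊a⌋ : ℤ) : ℝ) = if ⌊a⌋ < ⌊a + ℓ⌋ then 1 else 0 := by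
  have hlo := Int.floor_le_floor (by linarith : a ≤ a + ℓ)
  have hhi := Int.floor_le_floor (by linarith : a + ℓ ≤ a + 1)
  rw [Int.floor_add_one] at hhi
  split_ifs with h
  · rw [show ⌊a + ℓ⌋ - ⌊a⌋ = 1 by omega, Int.cast_one]
  · rw [show ⌊a + ℓ⌋ - ⌊a⌋ = 0 by omega, Int.cast_zero]

lemma Int.cast_floor_sub_of_mem_Ioc (c : ℝ) {θ : ℝ} (hθ : θ ∈ Ioc 0 1) :
    (⌊c - θ⌋ : ℝ) = ⌊c⌋ - (Ioi (Int.fract c)).indicator 1 θ := by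
  have hc := Int.floor_add_fract c
  have := Int.fract_nonneg c
  have := Int.fract_lt_one c
  obtain ⟨hθ0, hθ1⟩ := hθ
  by_cases h : Int.fract c < θ
  · rw [indicator_of_mem (show θ ∈ Ioi _ from h), Pi.one_apply, ← Int.cast_one, ← Int.cast_sub,
      Int.cast_inj, Int.floor_eq_iff]
    push_cast
    constructor <;> linarith
  · rw [indicator_of_notMem (show θ ∉ Ioi _ from h), sub_zero, Int.cast_inj, Int.floor_eq_iff]
    constructor <;> linarith [not_lt.mp h]

lemma integrableOn_indicator_Ioi_one (a : ℝ) :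
    IntegrableOn ((Ioi a).indicator (1 : ℝ → ℝ)) (Ioc 0 1) :=
  (integrableOn_const (by simp)).indicator measurableSet_Ioi

lemma integrableOn_floor_sub (c : ℝ) : IntegrableOn (fun θ => (⌊c - θ⌋ : ℝ)) (Ioc 0 1) :=
  ((integrableOn_const (by simp)).sub (integrableOn_indicator_Ioi_one _)).congr_fun
    (fun θ hθ => (Int.cast_floor_sub_of_mem_Ioc c hθ).symm) measurableSet_Ioc

lemma setIntegral_floor_sub (c : ℝ) : ∫ θ in Ioc 0 1, (⌊c - θ⌋ : ℝ) = c - 1 := by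
  rw [setIntegral_congr_fun measurableSet_Ioc fun θ hθ => Int.cast_floor_sub_of_mem_Ioc c hθ,
    integral_sub (integrableOn_const (C := (⌊c⌋ : ℝ)) (by simp))
      (integrableOn_indicator_Ioi_one _),
    integral_indicator_one measurableSet_Ioi,
    measureReal_restrict_apply measurableSet_Ioi, inter_comm, Ioc_inter_Ioi,
    sup_eq_right.mpr (Int.fract_nonneg c), Real.volume_real_Ioc_of_le (Int.fract_lt_one c).le]
  simp only [setIntegral_const, Real.volume_real_Ioc_of_le zero_le_one, sub_zero, one_smul]
  linarith [Int.floor_add_fract c]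

lemma integrableOn_floor_sub_add_sub_floor_sub (c ℓ : ℝ) :
    IntegrableOn (fun θ => (⌊c - θ + ℓ⌋ : ℝ) - ⌊c - θ⌋) (Ioc 0 1) := by
  simp_rw [sub_add_eq_add_sub]
  exact (integrableOn_floor_sub _).sub (integrableOn_floor_sub _)

lemma setIntegral_floor_sub_add_sub_floor_sub (c ℓ : ℝ) :
    ∫ θ in Ioc 0 1, ((⌊c - θ + ℓ⌋ : ℝ) - ⌊c - θ⌋) = ℓ := by
  simp_rw [sub_add_eq_add_sub]
  rw [integral_sub (integrableOn_floor_sub _) (integrableOn_floor_sub _), setIntegral_floor_sub,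
    setIntegral_floor_sub]
  ring

lemma setIntegral_mem_convexHull {E : Type*} [NormedAddCommGroup E] [NormedSpace ℝ E]
    [CompleteSpace E] {s : Set E} (hs : s.Finite) {f : ℝ → E} (hf : IntegrableOn f (Ioc 0 1))
    (hfs : ∀ θ ∈ Ioc (0 : ℝ) 1, f θ ∈ s) : ∫ θ in Ioc 0 1, f θ ∈ convexHull ℝ s := by
  have : IsProbabilityMeasure (volume.restrict (Ioc (0 : ℝ) 1)) := ⟨by simp⟩
  exact Convex.integral_mem (convex_convexHull ℝ s) (hs.isClosed_convexHull (𝕜 := ℝ))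
    (ae_restrict_of_forall_mem measurableSet_Ioc fun θ hθ => subset_convexHull ℝ s (hfs θ hθ)) hf

end Rounding

lemma finite_stableSetVectors {n : ℕ} (G : SimpleGraph (Fin n)) : (stableSetVectors G).Finite :=
  (Set.finite_range fun U : Finset (Fin n) => fun i => if i ∈ U then (1 : ℝ) else 0).subset
    fun _ ⟨U, _, hU⟩ => ⟨U, hU.symm⟩

section CycleRounding

open MeasureTheory Set

variable {n : ℕ} [NeZero n] (x s : Fin n → ℝ)

/-- Arc `j` is `(arcStart x s j, arcStart x s j + x j]`, followed by a gap of length `s j`;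
indices `t : ℕ` are read modulo `n`, so the arcs wind around the cycle. -/
def arcStart (j : ℕ) : ℝ := ∑ t ∈ Finset.range j, (x t + s t)

/-- The vertices whose arc contains a point of `θ + ℤ`. -/
noncomputable def roundedSet (θ : ℝ) : Finset (Fin n) :=
  Finset.univ.filter fun i => ⌊arcStart x s i - θ⌋ < ⌊arcStart x s i - θ + x i⌋

lemma arcStart_succ (j : ℕ) : arcStart x s (j + 1) = arcStart x s j + x j + s j := by
  simp only [arcStart, Finset.sum_range_succ]
  ring

variable {x s}

lemma arcStart_add_period {k : ℕ} (hsum : ∑ i, (x i + s i) = k) (j : ℕ) :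
    arcStart x s (j + n) = arcStart x s j + k := by
  induction j with
  | zero =>
    rw [zero_add, arcStart, ← Fin.sum_univ_eq_sum_range (fun t => x t + s t)]
    simp [arcStart, hsum]
  | succ j ih =>
    rw [add_right_comm, arcStart_succ, ih, arcStart_succ]
    simp only [Nat.cast_add, Fin.natCast_self, add_zero]
    ring

lemma natCast_mem_roundedSet_iff {k : ℕ} (hsum : ∑ i, (x i + s i) = k) (θ : ℝ) (j : ℕ) :
    (j : Fin n) ∈ roundedSet x s θ ↔ ⌊arcStart x s j - θ⌋ < ⌊arcStart x s j - θ + x j⌋ := by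
  have hper : Function.Periodic (fun j : ℕ => ⌊arcStart x s j - θ⌋ < ⌊arcStart x s j - θ + x j⌋)
      n := by
    intro j
    simp only [arcStart_add_period hsum, Nat.cast_add, Fin.natCast_self, add_zero,
      add_sub_right_comm _ (k : ℝ), add_right_comm (arcStart x s j - θ) (k : ℝ),
      Int.floor_add_natCast, add_lt_add_iff_right]
  rw [← hper.map_mod_nat j, ← Fin.val_natCast]
  simp only [roundedSet, Finset.mem_filter, Finset.mem_univ, true_and, Fin.cast_val_eq_self]

lemma indicator_roundedSet_mem_stableSetVectors {k : ℕ} (hs : ∀ i, 0 ≤ s i)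
    (hxs : ∀ i, x i + s i + x (i + 1) ≤ 1) (hsum : ∑ i, (x i + s i) = k) (θ : ℝ) :
    (fun i => if i ∈ roundedSet x s θ then (1 : ℝ) else 0) ∈
      stableSetVectors (SimpleGraph.cycleGraph n) := by
  have hnext (a : Fin n) (ha : a ∈ roundedSet x s θ) : a + 1 ∉ roundedSet x s θ := by
    rw [← Fin.cast_val_eq_self a, natCast_mem_roundedSet_iff hsum] at ha
    rw [← Fin.cast_val_eq_self a, ← Nat.cast_succ, natCast_mem_roundedSet_iff hsum, not_lt]
    have hstart := arcStart_succ x s a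
    simp only [Fin.cast_val_eq_self, Nat.cast_succ] at ha hstart ⊢
    -- consecutive arcs, with the gap between them, fit in a window of length one
    refine Int.floor_le_floor_of_floor_lt_floor ?_ ?_ ha
    · linarith [hs a]
    · linarith [hxs a]
  refine ⟨roundedSet x s θ, fun i hi j hj hij => ?_, rfl⟩
  rcases SimpleGraph.eq_add_one_or_eq_add_one_of_cycleGraph_adj hij with rfl | rfl
  exacts [hnext j hj hi, hnext i hi hj]

lemma indicator_roundedSet_apply (hx : ∀ i, 0 ≤ x i) (hs : ∀ i, 0 ≤ s i)
    (hxs : ∀ i, x i + s i + x (i + 1) ≤ 1) (θ : ℝ) (i : Fin n) :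
    (if i ∈ roundedSet x s θ then (1 : ℝ) else 0) =
      (⌊arcStart x s i - θ + x i⌋ : ℝ) - ⌊arcStart x s i - θ⌋ := by
  have hx1 : x i ≤ 1 := by linarith [hxs i, hs i, hx (i + 1)]
  simp only [roundedSet, Finset.mem_filter, Finset.mem_univ, true_and]
  rw [← Int.cast_floor_add_sub_floor (hx i) hx1, Int.cast_sub]

lemma mem_stabPolytope_cycleGraph_of_arcs {k : ℕ} (hx : ∀ i, 0 ≤ x i) (hs : ∀ i, 0 ≤ s i)
    (hxs : ∀ i, x i + s i + x (i + 1) ≤ 1) (hsum : ∑ i, (x i + s i) = k) :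
    x ∈ stabPolytope (SimpleGraph.cycleGraph n) := by
  have hint (i : Fin n) :
      IntegrableOn (fun θ => if i ∈ roundedSet x s θ then (1 : ℝ) else 0) (Ioc 0 1) := by
    simp only [indicator_roundedSet_apply hx hs hxs]
    exact integrableOn_floor_sub_add_sub_floor_sub _ _
  have hmean : ∫ θ in Ioc 0 1, (fun i => if i ∈ roundedSet x s θ then (1 : ℝ) else 0) = x := by
    funext i
    rw [eval_integral hint]
    simp only [indicator_roundedSet_apply hx hs hxs]
    exact setIntegral_floor_sub_add_sub_floor_sub _ _
  rw [← hmean]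
  exact setIntegral_mem_convexHull (finite_stableSetVectors _) (Integrable.of_eval hint)
    fun θ _ => indicator_roundedSet_mem_stableSetVectors hs hxs hsum θ

end CycleRounding

lemma mem_stabPolytope_cycleGraph_of_le {k : ℕ} {x : Fin (2 * k + 1) → ℝ} (hx : ∀ i, 0 ≤ x i)
    (hedge : ∀ i, 0 ≤ edgeSlack x i) (hsum : ∑ i, x i ≤ k) :
    x ∈ stabPolytope (SimpleGraph.cycleGraph (2 * k + 1)) := by
  set S := k - ∑ i, x i
  have hS : 0 ≤ S := sub_nonneg.mpr hsum
  have hc : 0 ≤ S / (1 + 2 * S) := by positivity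
  have hc1 : S / (1 + 2 * S) ≤ 1 := (div_le_one (by positivity)).mpr (by linarith)
  -- gaps proportional to the edge slacks, which sum to `1 + 2 * S`
  refine mem_stabPolytope_cycleGraph_of_arcs (k := k)
    (s := fun i => S / (1 + 2 * S) * edgeSlack x i) hx (fun i => mul_nonneg hc (hedge i))
    (fun i => ?_) ?_
  · have := mul_le_of_le_one_left (hedge i) hc1
    simp only [edgeSlack] at this ⊢
    linarith
  · have h := sum_edgeSlack_add x 0
    simp only [add_zero] at h
    rw [Finset.sum_add_distrib, ← Finset.mul_sum, h]
    push_cast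
    field_simp
    ring

/-- If `G` is an odd cycle of length `2k+1 ≥ 5`, then `STAB(G) = TH₂(I_G)`. -/
theorem stabPolytope_eq_thetaBody_two_of_odd_cycle (k : ℕ) (hk : 2 ≤ k) :
    stabPolytope (SimpleGraph.cycleGraph (2 * k + 1)) =
      thetaBody ((stableIdeal (SimpleGraph.cycleGraph (2 * k + 1)) :
        Ideal (MvPolynomial (Fin (2 * k + 1)) ℝ)) : Set (MvPolynomial (Fin (2 * k + 1)) ℝ)) 2 := by
  refine (stabPolytope_subset_thetaBody _ 2).antisymm fun p hp => ?_
  apply mem_stabPolytope_cycleGraph_of_le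
  · intro i
    simpa using hp (X i) (totalDegree_X i).le (isKSos_X _ one_le_two i)
  · intro i
    simpa [map_edgeSlack, Function.comp_def] using hp _ (totalDegree_edgeSlack_X_le i)
      (isKSos_edgeSlack_X (by omega) one_le_two i)
  · simpa using hp _ (totalDegree_natCast_sub_sum_X_le k) (isKSos_natCast_sub_sum_X (by omega))
end

section
/- Let S ⊆ ℝⁿ be the vertex set of a (k+1)-level polytope. Then the vanishing ideal I(S) is TH_k-exact. -/
open MvPolynomial

/-- `F` is a facet of the polytope `P`: a nonempty exposed face of dimension `dim P - 1`. -/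
def IsFacet {n : ℕ} (P F : Set (Fin n → ℝ)) : Prop :=
  IsExposed ℝ P F ∧ F.Nonempty ∧ F ≠ P ∧
    Module.finrank ℝ (vectorSpan ℝ F) + 1 = Module.finrank ℝ (vectorSpan ℝ P)

/-- A finite point set `S` (thought of as the vertex set of the polytope `conv S`) is `m`-level
if for every facet `F` of `conv S` and every supporting hyperplane `{l = c}` of `conv S`
containing `F`, there are `m - 1` hyperplanes parallel to it such that every point of `S` lies
on one of the `m` hyperplanes. -/
def IsMLevel {n : ℕ} (m : ℕ) (S : Set (Fin n → ℝ)) : Prop :=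
  ∀ F : Set (Fin n → ℝ), IsFacet (convexHull ℝ S) F →
    ∀ (l : (Fin n → ℝ) →ₗ[ℝ] ℝ) (c : ℝ), l ≠ 0 →
      (∀ x ∈ convexHull ℝ S, l x ≤ c) → (∀ x ∈ F, l x = c) →
        ∃ cs : Fin (m - 1) → ℝ, ∀ v ∈ S, l v = c ∨ ∃ i, l v = cs i

/-!
`conv S ⊆ TH_k(I(S))` holds for every `S`: a linear polynomial that is a sum of squares modulo
`I(S)` is nonnegative on `S`, hence on `conv S`. Conversely let `p ∉ conv S`. If `p` is not even
in the affine hull of `S`, an affine function vanishing on `S` but negative at `p` lies in `I(S)`.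
Otherwise `p` violates a facet inequality `l ≤ c` of `conv S`: take a Hahn–Banach hyperplane
separating `p` from `S` and rotate it about its contact face and `p` until the contact face
becomes a facet. Being `(k+1)`-level, `l` takes at most `k + 1` values `e` on `S`, so the Lagrange
interpolant `q` of `e ↦ √(c - e)` has degree at most `k` and `c - l ≡ q(l)²` modulo `I(S)`.
-/

namespace Finsupp

lemma eq_zero_or_eq_single_of_degree_le_one_s14 {σ : Type*} {m : σ →₀ ℕ} (hm : m.degree ≤ 1) :
    m = 0 ∨ ∃ i, m = single i 1 := by
  rcases Nat.le_one_iff_eq_zero_or_eq_one.mp hm with h | h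
  · exact Or.inl ((degree_eq_zero_iff m).mp h)
  · right
    classical
    obtain ⟨i, hi⟩ := Multiset.card_eq_one.mp ((card_toMultiset m).trans h)
    refine ⟨i, ext fun j => ?_⟩
    rw [← count_toMultiset, hi, ← count_toMultiset, toMultiset_single, one_smul]

end Finsupp

namespace MvPolynomial

variable {σ R : Type*} [CommRing R]

lemma eval_add_of_totalDegree_le_one {l : MvPolynomial σ R} (hl : l.totalDegree ≤ 1)
    (x y : σ → R) {a b : R} (hab : a + b = 1) :
    eval (a • x + b • y) l = a * eval x l + b * eval y l := by
  conv_lhs => rw [← l.support_sum_monomial_coeff]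
  conv_rhs => rw [← l.support_sum_monomial_coeff]
  simp only [map_sum, Finset.mul_sum, ← Finset.sum_add_distrib]
  refine Finset.sum_congr rfl fun m hm => ?_
  rcases Finsupp.eq_zero_or_eq_single_of_degree_le_one_s14 ((le_totalDegree hm).trans hl) with
    rfl | ⟨i, rfl⟩
  · simp only [eval_monomial, Finsupp.prod_zero_index, mul_one, ← add_mul, hab, one_mul]
  · simp only [eval_monomial, Finsupp.prod_single_index, pow_zero, pow_one, Pi.add_apply,
      Pi.smul_apply, smul_eq_mul]
    ring

lemma exists_totalDegree_le_one_eval_eq_sub [Fintype σ] (l : (σ → R) →ₗ[R] R) (c : R) :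
    ∃ h : MvPolynomial σ R, h.totalDegree ≤ 1 ∧ ∀ x, eval x h = c - l x := by
  classical
  have hl : ∀ x, l x = ∑ i, x i * l (Pi.single i 1) := fun x => by
    conv_lhs => rw [← Finset.univ_sum_single x]
    refine (map_sum l _ _).trans (Finset.sum_congr rfl fun i _ => ?_)
    rw [← smul_eq_mul, ← map_smul, ← Pi.single_smul', smul_eq_mul, mul_one]
  refine ⟨C c - ∑ i, C (l (Pi.single i 1)) * X i, ?_, fun x => ?_⟩
  · refine (totalDegree_sub _ _).trans (max_le (by simp) ?_)
    refine (totalDegree_finsetSum _ _).trans (Finset.sup_le fun i _ => ?_)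
    rw [C_mul_X_eq_monomial]
    exact (totalDegree_monomial_le _ _).trans (by simp)
  · simp [hl x, mul_comm]

lemma totalDegree_aeval_le (h : MvPolynomial σ R) (q : Polynomial R) :
    (Polynomial.aeval h q).totalDegree ≤ q.natDegree * h.totalDegree := by
  rw [Polynomial.aeval_eq_sum_range]
  refine (totalDegree_finsetSum _ _).trans (Finset.sup_le fun i hi => ?_)
  refine (totalDegree_smul_le _ _).trans ((totalDegree_pow _ _).trans ?_)
  exact Nat.mul_le_mul_right _ (Nat.lt_succ_iff.mp (Finset.mem_range.mp hi))

lemma eval_aeval (x : σ → R) (h : MvPolynomial σ R) (q : Polynomial R) :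
    eval x (Polynomial.aeval h q) = q.eval (eval x h) := by
  simpa using (Polynomial.aeval_algHom_apply (aeval x) h q).symm

end MvPolynomial

section ThetaBody

variable {σ : Type*}

lemma isKSos_of_mem {I : Set (MvPolynomial σ ℝ)} {h : MvPolynomial σ ℝ} (k : ℕ)
    (hh : h ∈ I) : IsKSos I k h :=
  ⟨0, Fin.elim0, fun i => i.elim0, by simpa using hh⟩

lemma IsKSos.eval_nonneg {S : Set (σ → ℝ)} {k : ℕ} {h : MvPolynomial σ ℝ}
    (hh : IsKSos (vanishingIdeal ℝ S : Set (MvPolynomial σ ℝ)) k h) {v : σ → ℝ}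
    (hv : v ∈ S) : 0 ≤ eval v h := by
  obtain ⟨r, g, -, hmem⟩ := hh
  have hv0 : eval v (h - ∑ i, g i ^ 2) = 0 := mem_vanishingIdeal_iff.mp hmem v hv
  rw [map_sub, sub_eq_zero] at hv0
  rw [hv0, map_sum]
  exact Finset.sum_nonneg fun i _ => by rw [map_pow]; positivity

lemma convex_setOf_eval_nonneg {l : MvPolynomial σ ℝ} (hl : l.totalDegree ≤ 1) :
    Convex ℝ {x : σ → ℝ | 0 ≤ eval x l} := by
  intro x hx y hy a b ha hb hab
  simp only [Set.mem_ofPred_eq, eval_add_of_totalDegree_le_one hl x y hab] at *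
  positivity

lemma convexHull_subset_thetaBody (S : Set (σ → ℝ)) (k : ℕ) :
    convexHull ℝ S ⊆ thetaBody (vanishingIdeal ℝ S : Set (MvPolynomial σ ℝ)) k :=
  fun _ hx _ hl hsos =>
    convexHull_min (fun _ hv => hsos.eval_nonneg hv) (convex_setOf_eval_nonneg hl) hx

lemma realVariety_vanishingIdeal {S : Set (σ → ℝ)} (hS : S.Finite) :
    realVariety (vanishingIdeal ℝ S : Set (MvPolynomial σ ℝ)) = S := by
  refine Set.Subset.antisymm (fun x hx => ?_) (fun v hv f hf => mem_vanishingIdeal_iff.mp hf v hv)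
  by_contra hxS
  choose i hi using fun s (hs : s ∈ S) => Function.ne_iff.mp (ne_of_mem_of_not_mem hs hxS)
  have := hS.fintype
  have hf : ∏ s : S, (X (i s s.2) - C (s.1 (i s s.2))) ∈ vanishingIdeal ℝ S := by
    refine mem_vanishingIdeal_iff.mpr fun v hv => ?_
    rw [map_prod]
    exact Finset.prod_eq_zero (Finset.mem_univ ⟨v, hv⟩) (by simp)
  have h0 := hx _ hf
  rw [map_prod] at h0
  obtain ⟨s, -, hs⟩ := Finset.prod_eq_zero_iff.mp h0
  simp only [map_sub, eval_X, eval_C, sub_eq_zero] at hs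
  exact hi s s.2 hs.symm

lemma isKSos_vanishingIdeal_of_eval_mem {S : Set (σ → ℝ)} {h : MvPolynomial σ ℝ} {d k : ℕ}
    (hdeg : h.totalDegree ≤ d) (E : Finset ℝ) (hE : E.card ≤ k + 1)
    (hval : ∀ v ∈ S, eval v h ∈ E) (hnonneg : ∀ v ∈ S, 0 ≤ eval v h) :
    IsKSos (vanishingIdeal ℝ S : Set (MvPolynomial σ ℝ)) (k * d) h := by
  set q := Lagrange.interpolate E id (fun e => Real.sqrt e)
  have hq : q.natDegree ≤ k := by
    have hlt : q.degree < ↑(k + 1) :=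
      (Lagrange.degree_interpolate_lt _ (Set.injOn_id _)).trans_le (by exact_mod_cast hE)
    exact Polynomial.natDegree_le_of_degree_le (Order.le_of_lt_succ hlt)
  refine ⟨1, fun _ => Polynomial.aeval h q, fun _ => ?_, ?_⟩
  · exact (totalDegree_aeval_le h q).trans (Nat.mul_le_mul hq hdeg)
  · rw [SetLike.mem_coe, mem_vanishingIdeal_iff]
    intro v hv
    change eval v (h - ∑ _ : Fin 1, Polynomial.aeval h q ^ 2) = 0
    have hnode : q.eval (eval v h) = √(eval v h) :=
      Lagrange.eval_interpolate_at_node _ (Set.injOn_id _) (hval v hv)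
    rw [Fin.sum_univ_one, map_sub, map_pow, eval_aeval, hnode, Real.sq_sqrt (hnonneg v hv),
      sub_self]

end ThetaBody

lemma Set.Finite.exists_tilt {ι : Type*} {s : Set ι} (hs : s.Finite) {f g : ι → ℝ}
    (hf : ∀ i ∈ s, f i ≤ 0) (hfg : ∀ i ∈ s, f i = 0 → g i ≤ 0) {j : ι} (hj : j ∈ s)
    (hgj : 0 < g j) :
    ∃ t : ℝ, (∀ i ∈ s, f i + t * g i ≤ 0) ∧ ∃ i ∈ s, 0 < g i ∧ f i + t * g i = 0 := by
  obtain ⟨i₀, ⟨hi₀, hgi₀⟩, hmin⟩ := Set.exists_min_image {i ∈ s | 0 < g i}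
    (fun i => -f i / g i) (hs.subset (Set.sep_subset _ _)) ⟨j, hj, hgj⟩
  have hfi₀ : f i₀ < 0 :=
    (hf i₀ hi₀).lt_of_ne fun h => (hfg i₀ hi₀ h).not_gt hgi₀
  refine ⟨-f i₀ / g i₀, fun i hi => ?_, i₀, hi₀, hgi₀, by field_simp; ring⟩
  rcases le_or_gt (g i) 0 with hgi | hgi
  · nlinarith [hf i hi, div_pos (neg_pos.mpr hfi₀) hgi₀]
  · have := (le_div_iff₀ hgi).mp (hmin i ⟨hi, hgi⟩)
    linarith

section LinearAlgebra

variable {K V : Type*} [Field K] [AddCommGroup V] [Module K V]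

lemma Submodule.exists_apply_eq_one_le_ker {W : Submodule K V} {z : V} (hz : z ∉ W) :
    ∃ f : V →ₗ[K] K, f z = 1 ∧ W ≤ LinearMap.ker f := by
  obtain ⟨f, hfW, hfz⟩ := LinearMap.exists_extend_of_notMem (0 : W →ₗ[K] K) hz 1
  exact ⟨f, hfz, fun y hy => by simpa using congr($hfW ⟨y, hy⟩)⟩

lemma vectorSpan_le_ker_of_forall_eq {T : Set V} {l : V →ₗ[K] K} {c : K}
    (h : ∀ v ∈ T, l v = c) : vectorSpan K T ≤ LinearMap.ker l := by
  rw [vectorSpan_def, Submodule.span_le]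
  rintro _ ⟨x, hx, y, hy, rfl⟩
  simp [h x hx, h y hy]

end LinearAlgebra

section Supporting

variable {V : Type*} [AddCommGroup V] [Module ℝ V] {S : Set V} {a p : V}

lemma exists_eq_on_lt_of_notMem_affineSpan (hp : p ∉ affineSpan ℝ S) :
    ∃ (φ : V →ₗ[ℝ] ℝ) (c : ℝ), (∀ v ∈ S, φ v = c) ∧ c < φ p := by
  rcases S.eq_empty_or_nonempty with rfl | ⟨a, ha⟩
  · exact ⟨0, -1, by simp, by simp⟩
  have haA := subset_affineSpan ℝ S ha
  have hpa : p -ᵥ a ∉ vectorSpan ℝ S := by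
    rwa [← direction_affineSpan, AffineSubspace.vsub_right_mem_direction_iff_mem haA]
  obtain ⟨φ, hφp, hφS⟩ := Submodule.exists_apply_eq_one_le_ker hpa
  refine ⟨φ, φ a, fun v hv => ?_, ?_⟩
  · have := hφS (vsub_mem_vectorSpan ℝ hv ha)
    simpa [sub_eq_zero] using this
  · rw [vsub_eq_sub, map_sub, sub_eq_iff_eq_add] at hφp
    linarith

lemma vectorSpan_convexHull (s : Set V) : vectorSpan ℝ (convexHull ℝ s) = vectorSpan ℝ s := by
  rw [← direction_affineSpan, affineSpan_convexHull, direction_affineSpan]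

lemma le_of_mem_convexHull {l : V →ₗ[ℝ] ℝ} {c : ℝ} (hub : ∀ v ∈ S, l v ≤ c) {x : V}
    (hx : x ∈ convexHull ℝ S) : l x ≤ c :=
  convexHull_min hub ((convex_Iic c).linear_preimage l) hx

variable [FiniteDimensional ℝ V]

lemma finrank_vectorSpan_face_lt {l : V →ₗ[ℝ] ℝ} {c : ℝ} (hp : p ∈ affineSpan ℝ S)
    (ha : a ∈ S) (hac : l a = c) (hlt : c < l p) :
    Module.finrank ℝ (vectorSpan ℝ {v ∈ S | l v = c}) < Module.finrank ℝ (vectorSpan ℝ S) := by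
  by_contra hle
  have heq : vectorSpan ℝ {v ∈ S | l v = c} = vectorSpan ℝ S :=
    Submodule.eq_of_le_of_finrank_le (vectorSpan_mono ℝ (Set.sep_subset _ _)) (not_lt.mp hle)
  have hpa : p -ᵥ a ∈ vectorSpan ℝ {v ∈ S | l v = c} := by
    rw [heq, ← direction_affineSpan]
    exact AffineSubspace.vsub_mem_direction hp (subset_affineSpan ℝ S ha)
  have := vectorSpan_le_ker_of_forall_eq (fun v (hv : v ∈ {v ∈ S | l v = c}) => hv.2) hpa
  simp only [LinearMap.mem_ker, vsub_eq_sub, map_sub, sub_eq_zero] at this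
  linarith

lemma exists_mem_vsub_notMem_of_finrank_lt {W : Submodule ℝ V} (ha : a ∈ S)
    (hW : Module.finrank ℝ W < Module.finrank ℝ (vectorSpan ℝ S)) : ∃ w ∈ S, w -ᵥ a ∉ W := by
  by_contra! h
  have hle : vectorSpan ℝ S ≤ W := by
    rw [vectorSpan_eq_span_vsub_set_right ℝ ha, Submodule.span_le]
    rintro _ ⟨w, hw, rfl⟩
    exact h w hw
  exact (Submodule.finrank_mono hle).not_gt hW

lemma exists_tilt_finrank_lt (hS : S.Finite) {l : V →ₗ[ℝ] ℝ} {c : ℝ}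
    (hub : ∀ v ∈ S, l v ≤ c) (ha : a ∈ S) (hac : l a = c) (hlt : c < l p)
    (hdim : Module.finrank ℝ (vectorSpan ℝ {v ∈ S | l v = c}) + 1 <
      Module.finrank ℝ (vectorSpan ℝ S)) :
    ∃ (l' : V →ₗ[ℝ] ℝ) (c' : ℝ), (∀ v ∈ S, l' v ≤ c') ∧ l' a = c' ∧ c' < l' p ∧
      Module.finrank ℝ (vectorSpan ℝ {v ∈ S | l v = c}) <
        Module.finrank ℝ (vectorSpan ℝ {v ∈ S | l' v = c'}) := by
  set T := {v ∈ S | l v = c}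
  have haT : a ∈ insert p T := Set.mem_insert_of_mem p ⟨ha, hac⟩
  obtain ⟨w, hwS, hw⟩ := exists_mem_vsub_notMem_of_finrank_lt ha
    ((finrank_vectorSpan_insert_le_set ℝ T p).trans_lt hdim)
  -- rotate the hyperplane `{l = c}` around `insert p T` until it hits a new point of `S`
  obtain ⟨ψ, hψw, hψW⟩ := Submodule.exists_apply_eq_one_le_ker hw
  have hψ : ∀ v ∈ insert p T, ψ v = ψ a := fun v hv => by
    simpa [sub_eq_zero] using hψW (vsub_mem_vectorSpan ℝ hv haT)
  obtain ⟨t, hbound, b, hbS, hψb, hb⟩ := hS.exists_tilt (f := fun v => l v - c)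
    (g := fun v => ψ v - ψ a) (fun v hv => by simp [hub v hv])
    (fun v hv h => by simp [hψ v (Set.mem_insert_of_mem p ⟨hv, sub_eq_zero.mp h⟩)]) hwS
    (by simp only [vsub_eq_sub, map_sub] at hψw; simp [hψw])
  refine ⟨l + t • ψ, c + t * ψ a, fun v hv => ?_, by simp [hac], ?_, ?_⟩
  · have := hbound v hv
    simp only [LinearMap.add_apply, LinearMap.smul_apply, smul_eq_mul]
    linarith
  · simp only [LinearMap.add_apply, LinearMap.smul_apply, smul_eq_mul,
      hψ p (Set.mem_insert p T)]
    linarith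
  · apply Submodule.finrank_lt_finrank_of_lt
    have hTT' : T ⊆ {v ∈ S | (l + t • ψ) v = c + t * ψ a} := fun v hv =>
      ⟨hv.1, by simp [hv.2, hψ v (Set.mem_insert_of_mem p hv)]⟩
    refine (vectorSpan_mono ℝ hTT').lt_of_ne fun heq => ?_
    have hmem : b -ᵥ a ∈ vectorSpan ℝ T := heq ▸ vsub_mem_vectorSpan ℝ
      ⟨hbS, by simp only [LinearMap.add_apply, LinearMap.smul_apply, smul_eq_mul]; linarith⟩
      (hTT' ⟨ha, hac⟩)
    have := hψW (vectorSpan_mono ℝ (Set.subset_insert p T) hmem)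
    simp only [LinearMap.mem_ker, vsub_eq_sub, map_sub] at this
    linarith

lemma exists_facet_lt_of_mem_affineSpan (hS : S.Finite) (hp : p ∈ affineSpan ℝ S)
    {l : V →ₗ[ℝ] ℝ} {c : ℝ} (hub : ∀ v ∈ S, l v ≤ c) (ha : a ∈ S) (hac : l a = c)
    (hlt : c < l p) :
    ∃ (l' : V →ₗ[ℝ] ℝ) (c' : ℝ), (∀ v ∈ S, l' v ≤ c') ∧ l' a = c' ∧ c' < l' p ∧
      Module.finrank ℝ (vectorSpan ℝ {v ∈ S | l' v = c'}) + 1 =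
        Module.finrank ℝ (vectorSpan ℝ S) := by
  by_cases hfacet : Module.finrank ℝ (vectorSpan ℝ {v ∈ S | l v = c}) + 1 =
      Module.finrank ℝ (vectorSpan ℝ S)
  · exact ⟨l, c, hub, hac, hlt, hfacet⟩
  have hface := finrank_vectorSpan_face_lt hp ha hac hlt
  obtain ⟨l', c', hub', hac', hlt', hdim'⟩ := exists_tilt_finrank_lt hS hub ha hac hlt (by omega)
  have hface' := finrank_vectorSpan_face_lt hp ha hac' hlt'
  exact exists_facet_lt_of_mem_affineSpan hS hp hub' ha hac' hlt'
termination_by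
  Module.finrank ℝ (vectorSpan ℝ S) - Module.finrank ℝ (vectorSpan ℝ {v ∈ S | l v = c})

end Supporting

section Polytope

variable {E : Type*} [NormedAddCommGroup E] [NormedSpace ℝ E] {S : Set E} {l : E →ₗ[ℝ] ℝ}
  {c : ℝ}

lemma exists_supporting_lt_of_notMem_convexHull (hS : S.Finite) (hne : S.Nonempty) {p : E}
    (hp : p ∉ convexHull ℝ S) :
    ∃ (l : E →ₗ[ℝ] ℝ) (c : ℝ), (∀ v ∈ S, l v ≤ c) ∧ (∃ a ∈ S, l a = c) ∧ c < l p := by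
  obtain ⟨f, u, hfu, hup⟩ := geometric_hahn_banach_closed_point (convex_convexHull ℝ S)
    (hS.isCompact_convexHull (𝕜 := ℝ)).isClosed hp
  obtain ⟨a, ha, hmax⟩ := Set.exists_max_image S f hS hne
  exact ⟨f, f a, hmax, ⟨a, ha, rfl⟩, (hfu a (subset_convexHull ℝ S ha)).trans hup⟩

variable [FiniteDimensional ℝ E]

lemma isExposed_sep_eq {A : Set E} (hA : ∀ x ∈ A, l x ≤ c) :
    IsExposed ℝ A {x ∈ A | l x = c} := by
  rintro ⟨x₀, hx₀, hx₀c⟩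
  refine ⟨LinearMap.toContinuousLinearMap l, Set.ext fun x => and_congr_right fun hx => ?_⟩
  simp only [LinearMap.coe_toContinuousLinearMap']
  exact ⟨fun hxc y hy => hxc ▸ hA y hy, fun h => (hA x hx).antisymm (hx₀c ▸ h x₀ hx₀)⟩

lemma sep_convexHull_eq_convexHull_sep (hS : S.Finite) (hub : ∀ v ∈ S, l v ≤ c) :
    {x ∈ convexHull ℝ S | l x = c} = convexHull ℝ {v ∈ S | l v = c} := by
  have hexp := isExposed_sep_eq fun x (hx : x ∈ convexHull ℝ S) => le_of_mem_convexHull hub hx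
  refine Set.Subset.antisymm ?_ fun x hx =>
    ⟨convexHull_mono (Set.sep_subset _ _) hx,
      convexHull_min (fun v hv => hv.2) ((convex_singleton c).linear_preimage l) hx⟩
  -- Krein–Milman: the face is the hull of its extreme points, which are vertices on `{l = c}`
  rw [← closure_convexHull_extremePoints (hexp.isCompact (hS.isCompact_convexHull (𝕜 := ℝ)))
    (hexp.convex (convex_convexHull ℝ S))]
  have hext : (convexHull ℝ S ∩ {x | l x = c}).extremePoints ℝ ⊆ {v ∈ S | l v = c} :=
    fun x hx =>
      ⟨extremePoints_convexHull_subset (hexp.isExtreme.extremePoints_subset_extremePoints hx),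
        (extremePoints_subset hx).2⟩
  exact closure_minimal (convexHull_mono hext)
    ((hS.subset (Set.sep_subset _ _)).isCompact_convexHull (𝕜 := ℝ)).isClosed

end Polytope

lemma isFacet_sep_convexHull {n : ℕ} {S : Set (Fin n → ℝ)} (hS : S.Finite)
    {l : (Fin n → ℝ) →ₗ[ℝ] ℝ} {c : ℝ} (hub : ∀ v ∈ S, l v ≤ c) {a : Fin n → ℝ} (ha : a ∈ S)
    (hac : l a = c)
    (hdim : Module.finrank ℝ (vectorSpan ℝ {v ∈ S | l v = c}) + 1 =
      Module.finrank ℝ (vectorSpan ℝ S)) :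
    IsFacet (convexHull ℝ S) {x ∈ convexHull ℝ S | l x = c} := by
  have hdim' : Module.finrank ℝ (vectorSpan ℝ {x ∈ convexHull ℝ S | l x = c}) + 1 =
      Module.finrank ℝ (vectorSpan ℝ (convexHull ℝ S)) := by
    rw [sep_convexHull_eq_convexHull_sep hS hub, vectorSpan_convexHull, vectorSpan_convexHull,
      hdim]
  refine ⟨isExposed_sep_eq fun x hx => le_of_mem_convexHull hub hx,
    ⟨a, subset_convexHull ℝ S ha, hac⟩, fun heq => ?_, hdim'⟩
  rw [heq] at hdim'
  omega

lemma exists_mem_vanishingIdeal_eval_neg {σ : Type*} [Fintype σ] {S : Set (σ → ℝ)}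
    {p : σ → ℝ} (hp : p ∉ affineSpan ℝ S) :
    ∃ h : MvPolynomial σ ℝ, h.totalDegree ≤ 1 ∧ h ∈ vanishingIdeal ℝ S ∧ eval p h < 0 := by
  obtain ⟨φ, c, hφS, hlt⟩ := exists_eq_on_lt_of_notMem_affineSpan hp
  obtain ⟨h, hdeg, heval⟩ := exists_totalDegree_le_one_eval_eq_sub φ c
  refine ⟨h, hdeg, mem_vanishingIdeal_iff.mpr fun v hv => ?_, by rw [heval]; linarith⟩
  change eval v h = 0
  rw [heval, hφS v hv, sub_self]

lemma exists_isKSos_eval_neg_of_isMLevel {n k : ℕ} {S : Set (Fin n → ℝ)} (hS : S.Finite)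
    (hlevel : IsMLevel (k + 1) S) {p : Fin n → ℝ} (hpA : p ∈ affineSpan ℝ S)
    (hpS : p ∉ convexHull ℝ S) :
    ∃ h : MvPolynomial (Fin n) ℝ, h.totalDegree ≤ 1 ∧
      IsKSos (vanishingIdeal ℝ S : Set (MvPolynomial (Fin n) ℝ)) k h ∧ eval p h < 0 := by
  have hne : S.Nonempty := (affineSpan_nonempty ℝ).mp ⟨p, hpA⟩
  obtain ⟨l₀, c₀, hub₀, ⟨a, ha, hac₀⟩, hlt₀⟩ :=
    exists_supporting_lt_of_notMem_convexHull hS hne hpS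
  obtain ⟨l, c, hub, hac, hlt, hdim⟩ :=
    exists_facet_lt_of_mem_affineSpan hS hpA hub₀ ha hac₀ hlt₀
  have hl : l ≠ 0 := by
    rintro rfl
    simp only [LinearMap.zero_apply] at hac hlt
    linarith
  obtain ⟨cs, hcs⟩ := hlevel _ (isFacet_sep_convexHull hS hub ha hac hdim) l c hl
    (fun x hx => le_of_mem_convexHull hub hx) (fun x hx => hx.2)
  obtain ⟨h, hdeg, heval⟩ := exists_totalDegree_le_one_eval_eq_sub l c
  refine ⟨h, hdeg, ?_, by rw [heval]; linarith⟩
  have hcard : (insert 0 (Finset.univ.image fun i => c - cs i)).card ≤ k + 1 :=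
    (Finset.card_insert_le _ _).trans (by
      simpa using Finset.card_image_le (s := Finset.univ) (f := fun i => c - cs i))
  simpa using isKSos_vanishingIdeal_of_eval_mem hdeg _ hcard
    (fun v hv => by rcases hcs v hv with h | ⟨i, h⟩ <;> simp [heval, h])
    (fun v hv => by rw [heval]; linarith [hub v hv])

theorem thExact_of_level_polytope_general {n : ℕ} (k : ℕ) (S : Set (Fin n → ℝ)) (hfin : S.Finite)
    (hlevel : IsMLevel (k + 1) S) :
    thetaBody ((vanishingIdeal ℝ S : Ideal (MvPolynomial (Fin n) ℝ)) :
        Set (MvPolynomial (Fin n) ℝ)) k =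
      closure (convexHull ℝ (realVariety ((vanishingIdeal ℝ S :
        Ideal (MvPolynomial (Fin n) ℝ)) : Set (MvPolynomial (Fin n) ℝ)))) := by
  rw [realVariety_vanishingIdeal hfin, (hfin.isCompact_convexHull (𝕜 := ℝ)).isClosed.closure_eq]
  refine Set.Subset.antisymm (fun p hp => ?_) (convexHull_subset_thetaBody S k)
  by_contra hpS
  obtain ⟨h, hdeg, hsos, hneg⟩ : ∃ h : MvPolynomial (Fin n) ℝ, h.totalDegree ≤ 1 ∧
      IsKSos (vanishingIdeal ℝ S : Set (MvPolynomial (Fin n) ℝ)) k h ∧ eval p h < 0 := by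
    by_cases hpA : p ∈ affineSpan ℝ S
    · exact exists_isKSos_eval_neg_of_isMLevel hfin hlevel hpA hpS
    · obtain ⟨h, hdeg, hI, hneg⟩ := exists_mem_vanishingIdeal_eval_neg hpA
      exact ⟨h, hdeg, isKSos_of_mem k hI, hneg⟩
  exact (hp h hdeg hsos).not_gt hneg

/-- If `S ⊆ ℝⁿ` is the vertex set of a `(k+1)`-level polytope, then the
vanishing ideal `I(S)` is `TH_k`-exact. -/
theorem thExact_of_level_polytope {n : ℕ} (k : ℕ) (S : Set (Fin n → ℝ)) (hfin : S.Finite)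
    (hvert : S = Set.extremePoints ℝ (convexHull ℝ S))
    (hlevel : IsMLevel (k + 1) S) :
    thetaBody ((vanishingIdeal ℝ S : Ideal (MvPolynomial (Fin n) ℝ)) :
        Set (MvPolynomial (Fin n) ℝ)) k =
      closure (convexHull ℝ (realVariety ((vanishingIdeal ℝ S :
        Ideal (MvPolynomial (Fin n) ℝ)) : Set (MvPolynomial (Fin n) ℝ)))) :=
  thExact_of_level_polytope_general k S hfin hlevel
end

section
/- Let I = ⟨x³ − y²⟩ ⊆ ℝ[x, y]. Then cl(conv(V_ℝ(I))) is the closed half-plane {(x, y) ∈ ℝ² : x ≥ 0}, yet TH_k(I) = ℝ² for every k ∈ ℕ; in particular no nonconstant polynomial of degree at most 1 is k-sos mod I for any k, and I is not TH-exact. -/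
open MvPolynomial

/-! The parametrization `t ↦ (t², t³)` of the cusp kills `I` and maps `ℝ[x, y]` into the
polynomials in `t` without linear term. If `a + b x + c y` is a sum of squares mod `I`, then
`a + b t² + c t³` is a sum of squares of such polynomials. The degree of a sum of real squares is
twice the largest degree of a summand, so every summand is constant: `b = c = 0` and `a ≥ 0`.
Hence `TH_k(I) = ℝ²`, whereas the convex hull of the cusp lies in `{x ≥ 0}` and contains
`{x > 0}`. -/

theorem MvPolynomial.exists_eq_C_add_sum_smul_X {σ R : Type*} [CommSemiring R] [Fintype σ]
    {l : MvPolynomial σ R} (hl : l.totalDegree ≤ 1) :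
    ∃ (a : R) (c : σ → R), l = C a + ∑ i, c i • X i := by
  have hsplit : l = homogeneousComponent 0 l + homogeneousComponent 1 l := by
    conv_lhs => rw [← sum_homogeneousComponent l]
    rcases Nat.le_one_iff_eq_zero_or_eq_one.mp hl with h | h
    · simp [h, homogeneousComponent_eq_zero]
    · simp [h, Finset.sum_range_succ]
  have hlin : homogeneousComponent 1 l ∈ Submodule.span R (Set.range X) := by
    rw [← homogeneousSubmodule_one_eq_span_X]
    exact homogeneousComponent_mem 1 l
  obtain ⟨c, hc⟩ := (Submodule.mem_span_range_iff_exists_fun R).mp hlin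
  exact ⟨coeff 0 l, c, by rw [hc, ← homogeneousComponent_zero]; exact hsplit⟩

theorem Polynomial.natDegree_sum_sq {ι R : Type*} [CommRing R] [LinearOrder R]
    [IsStrictOrderedRing R] (s : Finset ι) (q : ι → Polynomial R) :
    (∑ i ∈ s, q i ^ 2).natDegree = 2 * s.sup fun i => (q i).natDegree := by
  set D := s.sup fun i => (q i).natDegree
  have hle : ∀ i ∈ s, (q i).natDegree ≤ D := fun i hi =>
    Finset.le_sup (f := fun i => (q i).natDegree) hi
  refine le_antisymm (natDegree_sum_le_of_forall_le s _ fun i hi =>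
    natDegree_pow_le.trans (by have := hle i hi; omega)) ?_
  rcases Nat.eq_zero_or_pos D with hD | hD
  · simp [hD]
  obtain ⟨i₀, hi₀, hqi₀⟩ := Finset.exists_mem_eq_sup s
    (Finset.nonempty_of_ne_empty (by rintro rfl; simp [D] at hD)) fun i => (q i).natDegree
  have hlead : (q i₀).coeff D ≠ 0 := by
    rw [show D = (q i₀).natDegree from hqi₀]
    refine leadingCoeff_ne_zero.mpr fun h => ?_
    simp only [h, natDegree_zero] at hqi₀
    exact hD.ne' hqi₀
  have hcoeff : (∑ i ∈ s, q i ^ 2).coeff (D + D) = ∑ i ∈ s, (q i).coeff D ^ 2 := by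
    rw [finsetSum_coeff]
    exact Finset.sum_congr rfl fun i hi => by
      rw [sq, sq, coeff_mul_add_eq_of_natDegree_le (hle i hi) (hle i hi)]
  have hpos : 0 < ∑ i ∈ s, (q i).coeff D ^ 2 :=
    Finset.sum_pos' (fun i _ => sq_nonneg _) ⟨i₀, hi₀, by positivity⟩
  have := le_natDegree_of_ne_zero (hcoeff ▸ hpos.ne')
  omega

theorem Polynomial.natDegree_sum_sq_eq_zero_of_coeff_one_eq_zero {ι R : Type*} [CommRing R]
    [LinearOrder R] [IsStrictOrderedRing R] {s : Finset ι} {q : ι → Polynomial R}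
    (hq : ∀ i ∈ s, (q i).coeff 1 = 0) (hdeg : (∑ i ∈ s, q i ^ 2).natDegree ≤ 3) :
    (∑ i ∈ s, q i ^ 2).natDegree = 0 := by
  rw [natDegree_sum_sq] at hdeg ⊢
  suffices ∀ i ∈ s, (q i).natDegree = 0 by
    rw [Finset.sup_eq_zero.mpr this, mul_zero]
  intro i hi
  have hle : (q i).natDegree ≤ 1 := by
    have := Finset.le_sup (f := fun i => (q i).natDegree) hi
    omega
  refine Nat.le_zero.mp (natDegree_le_iff_coeff_eq_zero.mpr fun N hN => ?_)
  rcases Nat.lt_or_ge 1 N with h | h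
  · exact coeff_eq_zero_of_natDegree_lt (hle.trans_lt h)
  · exact (show N = 1 by omega) ▸ hq i hi

theorem IsKSos.exists_map_eq_sum_sq {σ A F : Type*} [CommRing A]
    [FunLike F (MvPolynomial σ ℝ) A] [RingHomClass F (MvPolynomial σ ℝ) A]
    {I : Set (MvPolynomial σ ℝ)} {k : ℕ} {h : MvPolynomial σ ℝ} (hh : IsKSos I k h) (φ : F)
    (hφ : ∀ f ∈ I, φ f = 0) :
    ∃ (r : ℕ) (g : Fin r → MvPolynomial σ ℝ), φ h = ∑ i, φ (g i) ^ 2 := by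
  obtain ⟨r, g, -, hmem⟩ := hh
  refine ⟨r, g, sub_eq_zero.mp ?_⟩
  simpa [map_sum] using hφ _ hmem

theorem realVariety_span_singleton {σ : Type*} (f : MvPolynomial σ ℝ) :
    realVariety (Ideal.span {f} : Set (MvPolynomial σ ℝ)) = {x | eval x f = 0} := by
  ext x
  refine ⟨fun hx => hx f (Ideal.subset_span rfl), fun hx g hg => ?_⟩
  obtain ⟨q, rfl⟩ := Ideal.mem_span_singleton'.mp hg
  rw [map_mul, show eval x f = 0 from hx, mul_zero]

noncomputable def cuspParam : Fin 2 → Polynomial ℝ := ![Polynomial.X ^ 2, Polynomial.X ^ 3]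

theorem span_cusp_le_ker_aeval_cuspParam :
    Ideal.span {X 0 ^ 3 - X 1 ^ 2} ≤ RingHom.ker (aeval (R := ℝ) cuspParam) := by
  rw [Ideal.span_singleton_le_iff_mem, RingHom.mem_ker]
  simp only [cuspParam, map_sub, map_pow, aeval_X, Matrix.cons_val_zero, Matrix.cons_val_one,
    Matrix.cons_val_fin_one]
  ring

theorem coeff_one_aeval_cuspParam (g : MvPolynomial (Fin 2) ℝ) :
    (aeval cuspParam g).coeff 1 = 0 := by
  induction g using MvPolynomial.induction_on with
  | C a => simp
  | add p q hp hq => simp [hp, hq]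
  | mul_X p i _ => fin_cases i <;> simp [cuspParam, Polynomial.coeff_mul_X_pow']

theorem exists_nonneg_eq_C_of_isKSos_cusp {I : Ideal (MvPolynomial (Fin 2) ℝ)}
    (hI : I = Ideal.span {X 0 ^ 3 - X 1 ^ 2}) {k : ℕ} {l : MvPolynomial (Fin 2) ℝ}
    (hl : l.totalDegree ≤ 1) (hs : IsKSos (I : Set (MvPolynomial (Fin 2) ℝ)) k l) :
    ∃ c : ℝ, 0 ≤ c ∧ l = C c := by
  obtain ⟨r, g, hsos⟩ := hs.exists_map_eq_sum_sq (aeval cuspParam) fun f hf =>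
    span_cusp_le_ker_aeval_cuspParam (hI ▸ hf)
  obtain ⟨a, c, rfl⟩ := exists_eq_C_add_sum_smul_X hl
  set P := aeval cuspParam (C a + ∑ i, c i • X i)
  have hP : P = Polynomial.C a + Polynomial.C (c 0) * Polynomial.X ^ 2 +
      Polynomial.C (c 1) * Polynomial.X ^ 3 := by
    simp [P, cuspParam, Fin.sum_univ_two, Polynomial.smul_eq_C_mul, add_assoc]
  have hconst : P.natDegree = 0 := by
    rw [hsos]
    refine Polynomial.natDegree_sum_sq_eq_zero_of_coeff_one_eq_zero
      (fun i _ => coeff_one_aeval_cuspParam (g i)) ?_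
    rw [← hsos, hP]
    compute_degree
  have hcoeff (n : ℕ) (hn : 0 < n) : P.coeff n = 0 :=
    Polynomial.coeff_eq_zero_of_natDegree_lt (hconst ▸ hn)
  rw [hP] at hcoeff
  have hc0 : c 0 = 0 := by simpa [Polynomial.coeff_X_pow] using hcoeff 2 two_pos
  have hc1 : c 1 = 0 := by simpa [Polynomial.coeff_X_pow] using hcoeff 3 three_pos
  have ha : 0 ≤ a := by
    have h0 : a = ∑ i, (aeval cuspParam (g i)).eval 0 ^ 2 := by
      simpa [hP, Polynomial.eval_finsetSum] using congrArg (Polynomial.eval 0) hsos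
    exact h0 ▸ Finset.sum_nonneg fun i _ => sq_nonneg _
  exact ⟨a, ha, by simp [Fin.sum_univ_two, hc0, hc1]⟩

theorem mem_convexHull_cusp {p : Fin 2 → ℝ} (hp : 0 < p 0) :
    p ∈ convexHull ℝ {q : Fin 2 → ℝ | q 0 ^ 3 = q 1 ^ 2} := by
  set V := {q : Fin 2 → ℝ | q 0 ^ 3 = q 1 ^ 2}
  -- For `t` this large, `p` lies in the triangle with vertices `0` and `(t², ±t³)` on the cusp.
  set t := 1 + p 0 + |p 1| / p 0
  have ht : 0 < t := by positivity
  have hx : p 0 ≤ t ^ 2 := by nlinarith [div_nonneg (abs_nonneg (p 1)) hp.le]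
  have hy : |p 1| ≤ p 0 * t := by
    have : |p 1| = p 0 * (|p 1| / p 0) := by field_simp
    nlinarith [div_nonneg (abs_nonneg (p 1)) hp.le]
  obtain ⟨hy₁, hy₂⟩ := abs_le.mp hy
  set w : Fin 3 → ℝ := ![(p 0 * t + p 1) / (2 * t ^ 3), (p 0 * t - p 1) / (2 * t ^ 3),
    1 - p 0 / t ^ 2]
  set z : Fin 3 → Fin 2 → ℝ := ![![t ^ 2, t ^ 3], ![t ^ 2, -t ^ 3], 0]
  have hw₀ : ∀ i ∈ Finset.univ, 0 ≤ w i := by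
    intro i _
    fin_cases i
    · exact div_nonneg (by linarith) (by positivity)
    · exact div_nonneg (by linarith) (by positivity)
    · exact sub_nonneg.mpr ((div_le_one (by positivity)).mpr hx)
  have hw₁ : ∑ i, w i = 1 := by
    simp only [w, Fin.sum_univ_three, Fin.isValue, Matrix.cons_val_zero, Matrix.cons_val_one,
      Matrix.cons_val]
    field_simp
    ring
  have hz : ∀ i ∈ Finset.univ, z i ∈ convexHull ℝ V := by
    intro i _
    refine subset_convexHull ℝ V ?_
    fin_cases i <;>
      simp only [z, V, Fin.isValue, Fin.zero_eta, Fin.mk_one, Fin.reduceFinMk, Matrix.cons_val,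
        Matrix.cons_val_zero, Matrix.cons_val_one, Matrix.cons_val_fin_one, Set.mem_ofPred_eq,
        Pi.zero_apply] <;>
      ring
  convert (convex_convexHull ℝ V).sum_mem hw₀ hw₁ hz
  ext i
  fin_cases i <;>
    simp only [w, z, Fin.isValue, Fin.zero_eta, Fin.mk_one, Finset.sum_apply, Pi.smul_apply,
      Pi.zero_apply, smul_eq_mul, Fin.sum_univ_three, Matrix.cons_val', Matrix.cons_val,
      Matrix.cons_val_zero, Matrix.cons_val_one, Matrix.cons_val_fin_one, mul_zero, add_zero] <;>
    field_simp <;>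
    ring

theorem closure_convexHull_cusp :
    closure (convexHull ℝ {q : Fin 2 → ℝ | q 0 ^ 3 = q 1 ^ 2}) = {p | 0 ≤ p 0} := by
  refine subset_antisymm ?_ ?_
  · refine closure_minimal (convexHull_min (fun q hq => ?_) ?_)
      (isClosed_le continuous_const (continuous_apply 0))
    · exact (Odd.pow_nonneg_iff (by decide)).mp (hq.symm ▸ sq_nonneg (q 1))
    · exact convex_halfSpace_ge ⟨fun _ _ => rfl, fun _ _ => rfl⟩ 0
  · have hcl := (isOpenMap_eval (X := fun _ : Fin 2 => ℝ) 0).preimage_closure_eq_closure_preimage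
      (continuous_apply 0) (Set.Ioi 0)
    rw [closure_Ioi] at hcl
    exact hcl.trans_subset (closure_mono fun p => mem_convexHull_cusp)

/-- For the cusp ideal `I = ⟨x³ - y²⟩ ⊆ ℝ[x,y]`: the closure of the convex
hull of `V_ℝ(I)` is the half-plane `{x ≥ 0}`, yet `TH_k(I) = ℝ²` for every `k`; no nonconstant
polynomial of degree at most one is `k`-sos mod `I` for any `k`, and `I` is not TH-exact. -/
theorem cusp_not_thExact (I : Ideal (MvPolynomial (Fin 2) ℝ))
    (hI : I = Ideal.span {X 0 ^ 3 - X 1 ^ 2}) :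
    closure (convexHull ℝ (realVariety (I : Set (MvPolynomial (Fin 2) ℝ)))) =
        {p : Fin 2 → ℝ | 0 ≤ p 0} ∧
      (∀ k : ℕ, thetaBody (I : Set (MvPolynomial (Fin 2) ℝ)) k = Set.univ) ∧
      (∀ (k : ℕ) (l : MvPolynomial (Fin 2) ℝ), l.totalDegree ≤ 1 →
        IsKSos (I : Set (MvPolynomial (Fin 2) ℝ)) k l → ∃ c : ℝ, l = C c) ∧
      ∀ k : ℕ, thetaBody (I : Set (MvPolynomial (Fin 2) ℝ)) k ≠
        closure (convexHull ℝ (realVariety (I : Set (MvPolynomial (Fin 2) ℝ)))) := by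
  have hhull : closure (convexHull ℝ (realVariety (I : Set (MvPolynomial (Fin 2) ℝ)))) =
      {p : Fin 2 → ℝ | 0 ≤ p 0} := by
    rw [hI, realVariety_span_singleton, ← closure_convexHull_cusp]
    simp [sub_eq_zero]
  have htheta (k : ℕ) : thetaBody (I : Set (MvPolynomial (Fin 2) ℝ)) k = Set.univ :=
    Set.eq_univ_of_forall fun _ l hl hs => by
      obtain ⟨c, hc, rfl⟩ := exists_nonneg_eq_C_of_isKSos_cusp hI hl hs
      simpa using hc
  refine ⟨hhull, htheta, fun k l hl hs => ?_, fun k h => ?_⟩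
  · obtain ⟨c, -, hc⟩ := exists_nonneg_eq_C_of_isKSos_cusp hI hl hs
    exact ⟨c, hc⟩
  · have : (fun _ => -1 : Fin 2 → ℝ) ∈ {p : Fin 2 → ℝ | 0 ≤ p 0} := by
      rw [← hhull, ← h, htheta k]
      trivial
    norm_num at this
end
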